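/- arXiv:2510.17562 — 4 statements merged into one kernel-verified Lean document; each statement's English description precedes it below -/
import Mathlib

section
/- Let g be a ground truth and p, q predictions of length n, let α, β be as specified, and let t ∈ ℕ with t ≥ 1. Suppose A ∈ I_1(g), p(i) = q(i) for all i ∉ A, DA(p,g) = DA(q,g) ∪ {A} with A ∉ DA(q,g), and for every A_O ∈ EA(p,g) ∪ LA(p,g) with A_O ∩ A ≠ ∅ it holds that A_O ∩ g^{-1}(0) ∈ TA(q,g). Then ALARM(g,p) > ALARM(g,q). (ALARM satisfies the advanced Detection of Anomalies property.) -/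
namespace TSAD

open Finset

/-- The index domain `{1, …, n}`. -/
def dom (n : ℕ) : Finset ℕ := Finset.Icc 1 n

/-- The interval `[l, u]` represented by a pair. -/
def ivl (W : ℕ × ℕ) : Finset ℕ := Finset.Icc W.1 W.2

/-- The positions in `A` where the binary sequence `s` takes the value `1` (`true`). -/
def ones (A : Finset ℕ) (s : ℕ → Bool) : Finset ℕ := A.filter (fun i => s i = true)

/-- `runs A s v` is the set of maximal intervals `[l, u] ⊆ A` on which `s` is constantly `v`
(maximal among intervals contained in `A`).  For `A = dom n` this is `I_v(s)`;
for `A ⊆ dom n` it is `I_v(s_A)`. -/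
def runs (A : Finset ℕ) (s : ℕ → Bool) (v : Bool) : Finset (ℕ × ℕ) :=
  (A ×ˢ A).filter (fun W =>
    W.1 ≤ W.2 ∧ ivl W ⊆ A ∧ (∀ i ∈ ivl W, s i = v) ∧
    (W.1 - 1 ∈ A → s (W.1 - 1) ≠ v) ∧ (W.2 + 1 ∈ A → s (W.2 + 1) ≠ v))

/-- Specification of the function `α` used in the (A)LARM scores: it assigns to each
restriction `p_A` a value in `[0,1)`, depends only on the restriction, strictly increases
when a single `0` of `p_A` is changed to a `1`, satisfies alarm timing, and early bias. -/
structure AlphaSpec (α : Finset ℕ → (ℕ → Bool) → ℝ) : Prop where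
  mem_Ico : ∀ A p, α A p ∈ Set.Ico (0 : ℝ) 1
  restrict : ∀ A (p q : ℕ → Bool), (∀ i ∈ A, p i = q i) → α A p = α A q
  mono : ∀ A (p q : ℕ → Bool) (i : ℕ), i ∈ A → p i = true → q i = false →
    (∀ j, j ≠ i → p j = q j) → α A q < α A p
  timing : ∀ A (p q : ℕ → Bool), (ones A p).card = (ones A q).card →
    ∀ (hp : (ones A p).Nonempty) (hq : (ones A q).Nonempty),
      (ones A p).min' hp < (ones A q).min' hq → α A q < α A p
  earlyBias : ∀ A (p q : ℕ → Bool) (i j : ℕ), i ∈ A → j ∈ A → i < j →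
    p i = true → p j = false → q i = false → q j = true →
    (∀ k, k ≠ i → k ≠ j → p k = q k) → α A q < α A p

/-- Specification of the function `β` used in the (A)LARM scores: strictly increasing
with values in `[0,1]`. -/
structure BetaSpec (β : ℕ → ℝ) : Prop where
  mem_Icc : ∀ k, β k ∈ Set.Icc (0 : ℝ) 1
  strictMono : StrictMono β

/-- The LARM score. -/
noncomputable def LARM (n : ℕ) (α : Finset ℕ → (ℕ → Bool) → ℝ) (β : ℕ → ℝ)
    (g p : ℕ → Bool) : ℝ :=
  (1 / ((runs (dom n) g true).card : ℝ)) *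
    ∑ A ∈ (runs (dom n) g true).filter (fun A => 0 < (runs (ivl A) p true).card),
      (α (ivl A) p + 1) / 2 ^ ((runs (ivl A) p true).card)
  - 2 * ∑ N ∈ runs (dom n) g false, ((runs (ivl N) p true).card : ℝ)
  - ∑ N ∈ runs (dom n) g false, β ((ones (ivl N) p).card)

/-- `I_{01}(g)`: intervals that are a maximal `0`-run immediately followed by a maximal
`1`-run. -/
def runs01 (n : ℕ) (g : ℕ → Bool) : Finset (ℕ × ℕ) :=
  ((dom n) ×ˢ (dom n)).filter (fun W =>
    ∃ b ∈ Finset.Ico W.1 W.2,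
      (W.1, b) ∈ runs (dom n) g false ∧ (b + 1, W.2) ∈ runs (dom n) g true)

/-- `I_{10}(g)`: intervals that are a maximal `1`-run immediately followed by a maximal
`0`-run. -/
def runs10 (n : ℕ) (g : ℕ → Bool) : Finset (ℕ × ℕ) :=
  ((dom n) ×ˢ (dom n)).filter (fun W =>
    ∃ b ∈ Finset.Ico W.1 W.2,
      (W.1, b) ∈ runs (dom n) g true ∧ (b + 1, W.2) ∈ runs (dom n) g false)

/-- Early alarms `EA(p,g)`. -/
def EA (n : ℕ) (p g : ℕ → Bool) : Finset (ℕ × ℕ) :=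
  ((dom n) ×ˢ (dom n)).filter (fun A =>
    (∃ I ∈ runs01 n g, A ∈ runs (ivl I) p true) ∧
    (∃ i ∈ ivl A, g i = true) ∧ (∃ i ∈ ivl A, g i = false))

/-- Late alarms `LA(p,g)`. -/
def LA (n : ℕ) (p g : ℕ → Bool) : Finset (ℕ × ℕ) :=
  ((dom n) ×ˢ (dom n)).filter (fun A =>
    (∃ I ∈ runs10 n g, A ∈ runs (ivl I) p true) ∧
    (∃ i ∈ ivl A, g i = true) ∧ (∃ i ∈ ivl A, g i = false))

/-- True false alarms `TA(p,g)`. -/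
def TA (n : ℕ) (p g : ℕ → Bool) : Finset (ℕ × ℕ) :=
  (runs (dom n) p true).filter (fun A =>
    (∀ i ∈ ivl A, g i = false) ∧
    ∀ B ∈ EA n p g ∪ LA n p g, ¬ ivl A ⊆ ivl B)

/-- Detected anomalies `DA(p,g)`. -/
def DA (n : ℕ) (p g : ℕ → Bool) : Finset (ℕ × ℕ) :=
  (runs (dom n) g true).filter (fun A =>
    ∃ B ∈ runs (dom n) p true,
      (ivl B ∩ ivl A).Nonempty ∧
      (B.1 ∈ ivl A ∨ ∀ i ∈ Finset.Ico B.1 A.1, g i = false))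

/-- The ALARM score with alarm tolerance `t` (the averaged term is `0` when
`DA(p,g) = ∅`, since in Lean `0 / 0 = 0`). -/
noncomputable def ALARM (n t : ℕ) (α : Finset ℕ → (ℕ → Bool) → ℝ) (β : ℕ → ℝ)
    (g p : ℕ → Bool) : ℝ :=
  ((DA n p g).card : ℝ)
  + (∑ A ∈ DA n p g, (α (ivl A) p + 1) / 2 ^ ((runs (ivl A) p true).card)) /
      ((DA n p g).card : ℝ)
  - β (((dom n).filter (fun i => p i = true ∧ g i = false)).card)
  - (1 / (t : ℝ)) * (((TA n p g).card : ℝ) + (3 / 2) * ((EA n p g).card : ℝ)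
      + (1 / 2) * ((LA n p g).card : ℝ))

/-- Point-wise Recall. -/
noncomputable def recallPW (n : ℕ) (g p : ℕ → Bool) : ℝ :=
  (((dom n).filter (fun i => p i = true ∧ g i = true)).card : ℝ) /
    ((ones (dom n) g).card : ℝ)

/-- Point-wise F1-score. -/
noncomputable def f1PW (n : ℕ) (g p : ℕ → Bool) : ℝ :=
  2 * (((dom n).filter (fun i => p i = true ∧ g i = true)).card : ℝ) /
    (((ones (dom n) p).card : ℝ) + ((ones (dom n) g).card : ℝ))

/-- Total length of the ground-truth anomaly windows hit by `p`. -/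
def Spa (n : ℕ) (g p : ℕ → Bool) : ℕ :=
  ∑ W ∈ (runs (dom n) g true).filter (fun W => ∃ i ∈ ivl W, p i = true), (ivl W).card

/-- Point-adjusted Recall. -/
noncomputable def recallPA (n : ℕ) (g p : ℕ → Bool) : ℝ :=
  ((Spa n g p : ℝ)) / ((ones (dom n) g).card : ℝ)

/-- Point-adjusted F1-score. -/
noncomputable def f1PA (n : ℕ) (g p : ℕ → Bool) : ℝ :=
  2 * (Spa n g p : ℝ) /
    ((Spa n g p : ℝ) + (((dom n).filter (fun i => p i = true ∧ g i = false)).card : ℝ)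
      + ((ones (dom n) g).card : ℝ))

/-- Point-wise Precision. -/
noncomputable def precisionPW (n : ℕ) (g p : ℕ → Bool) : ℝ :=
  (((dom n).filter (fun i => p i = true ∧ g i = true)).card : ℝ) /
    ((ones (dom n) p).card : ℝ)

/-- Event-wise Recall. -/
noncomputable def recallEvent (n : ℕ) (g p : ℕ → Bool) : ℝ :=
  (((runs (dom n) g true).filter (fun W => ∃ i ∈ ivl W, p i = true)).card : ℝ) /
    ((runs (dom n) g true).card : ℝ)

/-- Composite F1-score. -/
noncomputable def Fc1 (n : ℕ) (g p : ℕ → Bool) : ℝ :=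
  2 * precisionPW n g p * recallEvent n g p / (precisionPW n g p + recallEvent n g p)

/-- Distance from `i` to the closest element of `S`. -/
noncomputable def minDist (i : ℕ) (S : Finset ℕ) : ℕ :=
  sInf {d : ℕ | ∃ j ∈ S, d = ((i : ℤ) - (j : ℤ)).natAbs}

/-- Temporal Distance. -/
noncomputable def TD (n : ℕ) (g p : ℕ → Bool) : ℕ :=
  ∑ i ∈ ones (dom n) g, minDist i (ones (dom n) p)
  + ∑ i ∈ ones (dom n) p, minDist i (ones (dom n) g)

/-- The set of ground-truth anomaly windows hit by `p`. -/
def Dset (n : ℕ) (g p : ℕ → Bool) : Finset (ℕ × ℕ) :=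
  (runs (dom n) g true).filter (fun W => ∃ i ∈ ivl W, p i = true)

/-- Delay of the first alarm of `p` within the window `W`. -/
noncomputable def delay (p : ℕ → Bool) (W : ℕ × ℕ) : ℕ :=
  sInf {i : ℕ | i ∈ ivl W ∧ p i = true} - W.1

/-- Average Alert Delay. -/
noncomputable def AAD (n : ℕ) (g p : ℕ → Bool) : ℝ :=
  (∑ W ∈ Dset n g p, (delay p W : ℝ)) / ((Dset n g p).card : ℝ)


/- ### Auxiliary lemmas -/

lemma mem_runs {S : Finset ℕ} {s : ℕ → Bool} {v : Bool} {W : ℕ × ℕ} :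
    W ∈ runs S s v ↔ W.1 ∈ S ∧ W.2 ∈ S ∧ W.1 ≤ W.2 ∧ ivl W ⊆ S ∧
      (∀ i ∈ ivl W, s i = v) ∧ (W.1 - 1 ∈ S → s (W.1 - 1) ≠ v) ∧
      (W.2 + 1 ∈ S → s (W.2 + 1) ≠ v) := by
  simp [runs, Finset.mem_filter, Finset.mem_product, and_assoc]

lemma mem_ivl {W : ℕ × ℕ} {i : ℕ} : i ∈ ivl W ↔ W.1 ≤ i ∧ i ≤ W.2 := by
  simp [ivl]

lemma mem_dom {n i : ℕ} : i ∈ dom n ↔ 1 ≤ i ∧ i ≤ n := by simp [dom]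

lemma runs_eq_of_mem {S : Finset ℕ} {s : ℕ → Bool} {v : Bool} {W W' : ℕ × ℕ}
    (hW : W ∈ runs S s v) (hW' : W' ∈ runs S s v) {i : ℕ}
    (hi : i ∈ ivl W) (hi' : i ∈ ivl W') : W = W' := by
  obtain ⟨_, _, hle, hsub, hconst, hl, hr⟩ := mem_runs.mp hW
  obtain ⟨_, _, hle', hsub', hconst', hl', hr'⟩ := mem_runs.mp hW'
  rw [mem_ivl] at hi hi'
  have h1 : W.1 = W'.1 := by
    rcases lt_trichotomy W.1 W'.1 with h | h | h
    · exfalso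
      have hmem : W'.1 - 1 ∈ ivl W := mem_ivl.mpr (by omega)
      exact hl' (hsub hmem) (hconst _ hmem)
    · exact h
    · exfalso
      have hmem : W.1 - 1 ∈ ivl W' := mem_ivl.mpr (by omega)
      exact hl (hsub' hmem) (hconst' _ hmem)
  have h2 : W.2 = W'.2 := by
    rcases lt_trichotomy W.2 W'.2 with h | h | h
    · exfalso
      have hmem : W.2 + 1 ∈ ivl W' := mem_ivl.mpr (by omega)
      exact hr (hsub' hmem) (hconst' _ hmem)
    · exact h
    · exfalso
      have hmem : W'.2 + 1 ∈ ivl W := mem_ivl.mpr (by omega)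
      exact hr' (hsub hmem) (hconst _ hmem)
  exact Prod.ext h1 h2

lemma runs_exists {a b : ℕ} (ha : 1 ≤ a) {s : ℕ → Bool} {v : Bool} {i : ℕ}
    (hi : i ∈ Finset.Icc a b) (hv : s i = v) :
    ∃ W ∈ runs (Finset.Icc a b) s v, i ∈ ivl W := by
  classical
  rw [Finset.mem_Icc] at hi
  obtain ⟨hai, hib⟩ := hi
  set P : ℕ → Prop := fun m => ∀ k, i ≤ k → k ≤ m → s k = v with hP
  have hPi : P i := fun k h1 h2 => by
    have : k = i := le_antisymm h2 h1
    rw [this]; exact hv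
  set u : ℕ := Nat.findGreatest P b with hu
  have hiu : i ≤ u := Nat.le_findGreatest hib hPi
  have hub : u ≤ b := Nat.findGreatest_le b
  have hPu : P u := Nat.findGreatest_spec hib hPi
  set Q : ℕ → Prop := fun d => d ≤ i - a ∧ ∀ k, i - d ≤ k → k ≤ i → s k = v with hQ
  have hQ0 : Q 0 := ⟨Nat.zero_le _, fun k h1 h2 => by
    have : k = i := le_antisymm h2 (by omega)
    rw [this]; exact hv⟩
  set d : ℕ := Nat.findGreatest Q (i - a) with hd
  have hQd : Q d := Nat.findGreatest_spec (Nat.zero_le _) hQ0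
  have hdia : d ≤ i - a := hQd.1
  refine ⟨(i - d, u), ?_, ?_⟩
  · rw [mem_runs]
    refine ⟨?_, ?_, by simp; omega, ?_, ?_, ?_, ?_⟩
    · simp only [Finset.mem_Icc]; omega
    · simp only [Finset.mem_Icc]; omega
    · intro k hk
      rw [mem_ivl] at hk
      simp only [Finset.mem_Icc]; omega
    · intro k hk
      rw [mem_ivl] at hk
      simp only at hk
      rcases le_or_gt k i with h | h
      · exact hQd.2 k hk.1 h
      · exact hPu k (by omega) hk.2
    · simp only [Finset.mem_Icc]
      intro hmem hcontra
      have hne : i - d - 1 < i - d := by omega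
      have : Q (d + 1) := by
        refine ⟨by omega, fun k h1 h2 => ?_⟩
        rcases eq_or_lt_of_le h1 with h | h
        · have : k = i - d - 1 := by omega
          rw [this]; exact hcontra
        · exact hQd.2 k (by omega) h2
      exact Nat.findGreatest_is_greatest (P := Q) (n := i - a) (by omega) (by omega) this
    · simp only [Finset.mem_Icc]
      intro hmem hcontra
      have : P (u + 1) := fun k h1 h2 => by
        rcases eq_or_lt_of_le h2 with h | h
        · rw [h]; exact hcontra
        · exact hPu k h1 (by omega)
      exact Nat.findGreatest_is_greatest (P := P) (n := b) (by omega) (by omega) this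
  · rw [mem_ivl]; constructor <;> simp <;> omega

lemma runs_congr {S : Finset ℕ} {s s' : ℕ → Bool} {v : Bool}
    (h : ∀ i ∈ S, s i = s' i) : runs S s v = runs S s' v := by
  unfold runs
  refine Finset.filter_congr fun W hW => ?_
  rw [Finset.mem_product] at hW
  constructor
  · rintro ⟨h1, h2, h3, h4, h5⟩
    exact ⟨h1, h2, fun i hi => (h i (h2 hi)).symm ▸ h3 i hi,
      fun hm => (h _ hm) ▸ h4 hm, fun hm => (h _ hm) ▸ h5 hm⟩
  · rintro ⟨h1, h2, h3, h4, h5⟩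
    exact ⟨h1, h2, fun i hi => (h i (h2 hi)) ▸ h3 i hi,
      fun hm => (h _ hm).symm ▸ h4 hm, fun hm => (h _ hm).symm ▸ h5 hm⟩

lemma Icc_sub_dom {n c d : ℕ} (hc : c ∈ dom n) (hd : d ∈ dom n) :
    Finset.Icc c d ⊆ dom n := by
  intro i hi
  rw [Finset.mem_Icc] at hi
  rw [mem_dom] at *
  omega

lemma dom_eq (n : ℕ) : dom n = Finset.Icc 1 n := rfl

lemma gA_true {n : ℕ} {g : ℕ → Bool} {A : ℕ × ℕ} (hA : A ∈ runs (dom n) g true) :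
    ∀ i ∈ ivl A, g i = true := (mem_runs.mp hA).2.2.2.2.1

lemma gA_left {n : ℕ} {g : ℕ → Bool} {A : ℕ × ℕ} (hA : A ∈ runs (dom n) g true)
    (h2 : 2 ≤ A.1) : g (A.1 - 1) = false := by
  have h := (mem_runs.mp hA).2.2.2.2.2.1
  have h1 := (mem_runs.mp hA).1
  rw [mem_dom] at h1
  have hdom : A.1 - 1 ∈ dom n := mem_dom.mpr (by omega)
  simpa using h hdom

lemma gA_right {n : ℕ} {g : ℕ → Bool} {A : ℕ × ℕ} (hA : A ∈ runs (dom n) g true)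
    (h2 : A.2 + 1 ≤ n) : g (A.2 + 1) = false := by
  have h := (mem_runs.mp hA).2.2.2.2.2.2
  have hdom : A.2 + 1 ∈ dom n := mem_dom.mpr ⟨by omega, h2⟩
  simpa using h hdom

lemma mem_EA {n : ℕ} {s g : ℕ → Bool} {B : ℕ × ℕ} :
    B ∈ EA n s g ↔ (B.1 ∈ dom n ∧ B.2 ∈ dom n) ∧
      (∃ I ∈ runs01 n g, B ∈ runs (ivl I) s true) ∧
      (∃ i ∈ ivl B, g i = true) ∧ (∃ i ∈ ivl B, g i = false) := by
  simp [EA, Finset.mem_filter, Finset.mem_product, and_assoc]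

lemma mem_LA {n : ℕ} {s g : ℕ → Bool} {B : ℕ × ℕ} :
    B ∈ LA n s g ↔ (B.1 ∈ dom n ∧ B.2 ∈ dom n) ∧
      (∃ I ∈ runs10 n g, B ∈ runs (ivl I) s true) ∧
      (∃ i ∈ ivl B, g i = true) ∧ (∃ i ∈ ivl B, g i = false) := by
  simp [LA, Finset.mem_filter, Finset.mem_product, and_assoc]

lemma mem_runs01 {n : ℕ} {g : ℕ → Bool} {I : ℕ × ℕ} :
    I ∈ runs01 n g ↔ (I.1 ∈ dom n ∧ I.2 ∈ dom n) ∧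
      ∃ b, (I.1 ≤ b ∧ b < I.2) ∧ (I.1, b) ∈ runs (dom n) g false ∧
        (b + 1, I.2) ∈ runs (dom n) g true := by
  simp [runs01, Finset.mem_filter, Finset.mem_product, Finset.mem_Ico, and_assoc]

lemma mem_runs10 {n : ℕ} {g : ℕ → Bool} {I : ℕ × ℕ} :
    I ∈ runs10 n g ↔ (I.1 ∈ dom n ∧ I.2 ∈ dom n) ∧
      ∃ b, (I.1 ≤ b ∧ b < I.2) ∧ (I.1, b) ∈ runs (dom n) g true ∧
        (b + 1, I.2) ∈ runs (dom n) g false := by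
  simp [runs10, Finset.mem_filter, Finset.mem_product, Finset.mem_Ico, and_assoc]

lemma EA_touch {n : ℕ} {g s : ℕ → Bool} {A B : ℕ × ℕ}
    (hA : A ∈ runs (dom n) g true) (hB : B ∈ EA n s g)
    (hmix : (ivl B ∩ ivl A).Nonempty) :
    ∃ lam, (lam, A.1 - 1) ∈ runs (dom n) g false ∧
      B ∈ runs (Finset.Icc lam A.2) s true ∧
      A.1 - 1 ∈ ivl B ∧ A.1 ∈ ivl B ∧ 2 ≤ A.1 := by
  obtain ⟨hBdom, ⟨I, hI, hBr⟩, ⟨j, hj, hgj⟩, ⟨i0, hi0, hgi0⟩⟩ := mem_EA.mp hB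
  obtain ⟨⟨hI1, hI2⟩, b, ⟨hb1, hb2⟩, h0run, h1run⟩ := mem_runs01.mp hI
  obtain ⟨m, hm⟩ := hmix
  rw [Finset.mem_inter] at hm
  obtain ⟨hmB, hmA⟩ := hm
  have hsubI : ivl B ⊆ ivl I := (mem_runs.mp hBr).2.2.2.1
  have h0const := (mem_runs.mp h0run).2.2.2.2.1
  have h1const := (mem_runs.mp h1run).2.2.2.2.1
  have hmI := hsubI hmB
  rw [mem_ivl] at hmI
  have hgm : g m = true := gA_true hA m hmA
  have hmgt : b + 1 ≤ m := by
    by_contra hcon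
    have : g m = false := h0const m (mem_ivl.mpr ⟨hmI.1, by omega⟩)
    simp [this] at hgm
  have h1A : (b + 1, I.2) = A :=
    runs_eq_of_mem h1run hA (mem_ivl.mpr ⟨hmgt, hmI.2⟩) hmA
  have hbA : b + 1 = A.1 := (Prod.ext_iff.mp h1A).1
  have hI2A : I.2 = A.2 := (Prod.ext_iff.mp h1A).2
  have hI1dom : 1 ≤ I.1 := (mem_dom.mp hI1).1
  have h2A : 2 ≤ A.1 := by omega
  -- the g-false point of B is ≤ b, the g-true point is ≥ b+1
  have hi0I := hsubI hi0
  rw [mem_ivl] at hi0I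
  have hi0b : i0 ≤ b := by
    by_contra hcon
    have : g i0 = true := h1const i0 (mem_ivl.mpr ⟨by omega, hi0I.2⟩)
    simp [this] at hgi0
  have hjI := hsubI hj
  rw [mem_ivl] at hjI
  have hjb : b + 1 ≤ j := by
    by_contra hcon
    have : g j = false := h0const j (mem_ivl.mpr ⟨hjI.1, by omega⟩)
    simp [this] at hgj
  rw [mem_ivl] at hi0 hj
  refine ⟨I.1, ?_, ?_, ?_, ?_, h2A⟩
  · have : (I.1, b) = (I.1, A.1 - 1) := by
      rw [Prod.ext_iff]; constructor; rfl; simp; omega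
    rwa [this] at h0run
  · have : ivl I = Finset.Icc I.1 A.2 := by rw [ivl, hI2A]
    rwa [this] at hBr
  · exact mem_ivl.mpr ⟨by omega, by omega⟩
  · exact mem_ivl.mpr ⟨by omega, by omega⟩

lemma LA_touch {n : ℕ} {g s : ℕ → Bool} {A B : ℕ × ℕ}
    (hA : A ∈ runs (dom n) g true) (hB : B ∈ LA n s g)
    (hmix : (ivl B ∩ ivl A).Nonempty) :
    ∃ rho, (A.2 + 1, rho) ∈ runs (dom n) g false ∧
      B ∈ runs (Finset.Icc A.1 rho) s true ∧
      A.2 ∈ ivl B ∧ A.2 + 1 ∈ ivl B ∧ A.2 + 1 ≤ n := by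
  obtain ⟨hBdom, ⟨I, hI, hBr⟩, ⟨j, hj, hgj⟩, ⟨i0, hi0, hgi0⟩⟩ := mem_LA.mp hB
  obtain ⟨⟨hI1, hI2⟩, b, ⟨hb1, hb2⟩, h1run, h0run⟩ := mem_runs10.mp hI
  obtain ⟨m, hm⟩ := hmix
  rw [Finset.mem_inter] at hm
  obtain ⟨hmB, hmA⟩ := hm
  have hsubI : ivl B ⊆ ivl I := (mem_runs.mp hBr).2.2.2.1
  have h0const := (mem_runs.mp h0run).2.2.2.2.1
  have h1const := (mem_runs.mp h1run).2.2.2.2.1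
  have hmI := hsubI hmB
  rw [mem_ivl] at hmI
  have hgm : g m = true := gA_true hA m hmA
  have hmlt : m ≤ b := by
    by_contra hcon
    have : g m = false := h0const m (mem_ivl.mpr ⟨by omega, hmI.2⟩)
    simp [this] at hgm
  have h1A : (I.1, b) = A :=
    runs_eq_of_mem h1run hA (mem_ivl.mpr ⟨hmI.1, hmlt⟩) hmA
  have hbA : b = A.2 := (Prod.ext_iff.mp h1A).2
  have hI1A : I.1 = A.1 := (Prod.ext_iff.mp h1A).1
  have hI2dom : I.2 ≤ n := (mem_dom.mp hI2).2
  have hi0I := hsubI hi0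
  rw [mem_ivl] at hi0I
  have hi0b : b + 1 ≤ i0 := by
    by_contra hcon
    have : g i0 = true := h1const i0 (mem_ivl.mpr ⟨hi0I.1, by omega⟩)
    simp [this] at hgi0
  have hjI := hsubI hj
  rw [mem_ivl] at hjI
  have hjb : j ≤ b := by
    by_contra hcon
    have : g j = false := h0const j (mem_ivl.mpr ⟨by omega, hjI.2⟩)
    simp [this] at hgj
  rw [mem_ivl] at hi0 hj
  refine ⟨I.2, ?_, ?_, ?_, ?_, by omega⟩
  · have : (b + 1, I.2) = (A.2 + 1, I.2) := by rw [hbA]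
    rwa [this] at h0run
  · have : ivl I = Finset.Icc A.1 I.2 := by rw [ivl, hI1A]
    rwa [this] at hBr
  · exact mem_ivl.mpr ⟨by omega, by omega⟩
  · exact mem_ivl.mpr ⟨by omega, by omega⟩

lemma EA_build {n : ℕ} {g s : ℕ → Bool} {A : ℕ × ℕ} (hA : A ∈ runs (dom n) g true)
    (h2 : 2 ≤ A.1) (hs1 : s (A.1 - 1) = true) (hs2 : s A.1 = true) :
    ∃ B ∈ EA n s g, A.1 ∈ ivl B := by
  have hA1dom : A.1 ∈ dom n := (mem_runs.mp hA).1
  have hA2dom : A.2 ∈ dom n := (mem_runs.mp hA).2.1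
  have hA12 : A.1 ≤ A.2 := (mem_runs.mp hA).2.2.1
  have hgl : g (A.1 - 1) = false := gA_left hA h2
  have hA1n : A.1 ≤ n := (mem_dom.mp hA1dom).2
  have hgA1 : g A.1 = true := gA_true hA A.1 (mem_ivl.mpr ⟨le_rfl, hA12⟩)
  obtain ⟨L0, hL0, hL0mem⟩ := runs_exists (a := 1) (b := n) le_rfl
      (Finset.mem_Icc.mpr ⟨by omega, by omega⟩) hgl
  rw [← dom_eq] at hL0
  rw [mem_ivl] at hL0mem
  have hL0c := (mem_runs.mp hL0).2.2.2.2.1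
  have hL02 : L0.2 = A.1 - 1 := by
    by_contra hne
    have hA1L : A.1 ∈ ivl L0 := mem_ivl.mpr ⟨by omega, by omega⟩
    have := hL0c A.1 hA1L
    simp [hgA1] at this
  have hL01dom : L0.1 ∈ dom n := (mem_runs.mp hL0).1
  have hL011 : 1 ≤ L0.1 := (mem_dom.mp hL01dom).1
  have hIr : (L0.1, A.2) ∈ runs01 n g := by
    rw [mem_runs01]
    refine ⟨⟨hL01dom, hA2dom⟩, A.1 - 1, ⟨by omega, by omega⟩, ?_, ?_⟩
    · have he : (L0.1, A.1 - 1) = L0 := by rw [Prod.ext_iff]; exact ⟨rfl, hL02.symm⟩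
      rwa [he]
    · have he : (A.1 - 1 + 1, A.2) = A := by
        rw [Prod.ext_iff]; exact ⟨by simp; omega, rfl⟩
      rwa [he]
  obtain ⟨B, hBr, hBmem⟩ := runs_exists (a := L0.1) (b := A.2) hL011
      (Finset.mem_Icc.mpr ⟨by omega, hA12⟩) hs2
  rw [mem_ivl] at hBmem
  have hB1 : B.1 ≤ A.1 - 1 := by
    by_contra hcon
    have hmax := (mem_runs.mp hBr).2.2.2.2.2.1
    have hB1A : B.1 = A.1 := by
      have := (mem_runs.mp hBr).1
      rw [Finset.mem_Icc] at this
      omega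
    rw [hB1A] at hmax
    exact hmax (Finset.mem_Icc.mpr ⟨by omega, by omega⟩) hs1
  refine ⟨B, ?_, mem_ivl.mpr hBmem⟩
  rw [mem_EA]
  have hsubdom : Finset.Icc L0.1 A.2 ⊆ dom n := Icc_sub_dom hL01dom hA2dom
  exact ⟨⟨hsubdom (mem_runs.mp hBr).1, hsubdom (mem_runs.mp hBr).2.1⟩,
    ⟨(L0.1, A.2), hIr, hBr⟩,
    ⟨A.1, mem_ivl.mpr hBmem, hgA1⟩,
    ⟨A.1 - 1, mem_ivl.mpr ⟨hB1, by omega⟩, hgl⟩⟩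

lemma LA_build {n : ℕ} {g s : ℕ → Bool} {A : ℕ × ℕ} (hA : A ∈ runs (dom n) g true)
    (h2 : A.2 + 1 ≤ n) (hs1 : s A.2 = true) (hs2 : s (A.2 + 1) = true) :
    ∃ B ∈ LA n s g, A.2 ∈ ivl B := by
  have hA1dom : A.1 ∈ dom n := (mem_runs.mp hA).1
  have hA2dom : A.2 ∈ dom n := (mem_runs.mp hA).2.1
  have hA12 : A.1 ≤ A.2 := (mem_runs.mp hA).2.2.1
  have hgr : g (A.2 + 1) = false := gA_right hA h2
  have hgA2 : g A.2 = true := gA_true hA A.2 (mem_ivl.mpr ⟨hA12, le_rfl⟩)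
  obtain ⟨R0, hR0, hR0mem⟩ := runs_exists (a := 1) (b := n) le_rfl
      (Finset.mem_Icc.mpr ⟨by omega, h2⟩) hgr
  rw [← dom_eq] at hR0
  rw [mem_ivl] at hR0mem
  have hR0c := (mem_runs.mp hR0).2.2.2.2.1
  have hR01 : R0.1 = A.2 + 1 := by
    by_contra hne
    have hA2R : A.2 ∈ ivl R0 := mem_ivl.mpr ⟨by omega, by omega⟩
    have := hR0c A.2 hA2R
    simp [hgA2] at this
  have hR02dom : R0.2 ∈ dom n := (mem_runs.mp hR0).2.1
  have hA11 : 1 ≤ A.1 := (mem_dom.mp hA1dom).1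
  have hIr : (A.1, R0.2) ∈ runs10 n g := by
    rw [mem_runs10]
    refine ⟨⟨hA1dom, hR02dom⟩, A.2, ⟨hA12, by omega⟩, ?_, ?_⟩
    · have he : (A.1, A.2) = A := rfl
      rwa [he]
    · have he : (A.2 + 1, R0.2) = R0 := by rw [Prod.ext_iff]; exact ⟨hR01.symm, rfl⟩
      rwa [he]
  obtain ⟨B, hBr, hBmem⟩ := runs_exists (a := A.1) (b := R0.2) hA11
      (Finset.mem_Icc.mpr ⟨hA12, by omega⟩) hs1
  rw [mem_ivl] at hBmem
  have hB2 : A.2 + 1 ≤ B.2 := by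
    by_contra hcon
    have hmax := (mem_runs.mp hBr).2.2.2.2.2.2
    have hB2A : B.2 = A.2 := by omega
    rw [hB2A] at hmax
    exact hmax (Finset.mem_Icc.mpr ⟨by omega, by omega⟩) hs2
  refine ⟨B, ?_, mem_ivl.mpr hBmem⟩
  rw [mem_LA]
  have hsubdom : Finset.Icc A.1 R0.2 ⊆ dom n := Icc_sub_dom hA1dom hR02dom
  exact ⟨⟨hsubdom (mem_runs.mp hBr).1, hsubdom (mem_runs.mp hBr).2.1⟩,
    ⟨(A.1, R0.2), hIr, hBr⟩,
    ⟨A.2, mem_ivl.mpr hBmem, hgA2⟩,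
    ⟨A.2 + 1, mem_ivl.mpr ⟨by omega, hB2⟩, hgr⟩⟩

lemma EA_touch_unique {n : ℕ} {g s : ℕ → Bool} {A B B' : ℕ × ℕ}
    (hA : A ∈ runs (dom n) g true) (hB : B ∈ EA n s g) (hB' : B' ∈ EA n s g)
    (h : A.1 ∈ ivl B) (h' : A.1 ∈ ivl B') : B = B' := by
  have hA1A : A.1 ∈ ivl A := mem_ivl.mpr ⟨le_rfl, (mem_runs.mp hA).2.2.1⟩
  obtain ⟨lam, hl0, hBr, _, hB1, _⟩ :=
    EA_touch hA hB ⟨A.1, Finset.mem_inter.mpr ⟨h, hA1A⟩⟩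
  obtain ⟨lam', hl0', hB'r, _, hB'1, _⟩ :=
    EA_touch hA hB' ⟨A.1, Finset.mem_inter.mpr ⟨h', hA1A⟩⟩
  have t1 : lam ≤ A.1 - 1 := (mem_runs.mp hl0).2.2.1
  have t2 : lam' ≤ A.1 - 1 := (mem_runs.mp hl0').2.2.1
  have hll : (lam, A.1 - 1) = (lam', A.1 - 1) :=
    runs_eq_of_mem hl0 hl0' (mem_ivl.mpr ⟨t1, le_rfl⟩) (mem_ivl.mpr ⟨t2, le_rfl⟩)
  have hl : lam = lam' := (Prod.ext_iff.mp hll).1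
  subst hl
  exact runs_eq_of_mem hBr hB'r h h'

lemma LA_touch_unique {n : ℕ} {g s : ℕ → Bool} {A B B' : ℕ × ℕ}
    (hA : A ∈ runs (dom n) g true) (hB : B ∈ LA n s g) (hB' : B' ∈ LA n s g)
    (h : A.2 ∈ ivl B) (h' : A.2 ∈ ivl B') : B = B' := by
  have hA2A : A.2 ∈ ivl A := mem_ivl.mpr ⟨(mem_runs.mp hA).2.2.1, le_rfl⟩
  obtain ⟨rho, hr0, hBr, _, hB1, _⟩ :=
    LA_touch hA hB ⟨A.2, Finset.mem_inter.mpr ⟨h, hA2A⟩⟩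
  obtain ⟨rho', hr0', hB'r, _, hB'1, _⟩ :=
    LA_touch hA hB' ⟨A.2, Finset.mem_inter.mpr ⟨h', hA2A⟩⟩
  have t1 : A.2 + 1 ≤ rho := (mem_runs.mp hr0).2.2.1
  have t2 : A.2 + 1 ≤ rho' := (mem_runs.mp hr0').2.2.1
  have hll : (A.2 + 1, rho) = (A.2 + 1, rho') :=
    runs_eq_of_mem hr0 hr0' (mem_ivl.mpr ⟨le_rfl, t1⟩) (mem_ivl.mpr ⟨le_rfl, t2⟩)
  have hr : rho = rho' := (Prod.ext_iff.mp hll).2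
  subst hr
  exact runs_eq_of_mem hBr hB'r h h'

lemma mem_TA {n : ℕ} {s g : ℕ → Bool} {B : ℕ × ℕ} :
    B ∈ TA n s g ↔ B ∈ runs (dom n) s true ∧ (∀ i ∈ ivl B, g i = false) ∧
      ∀ C ∈ EA n s g ∪ LA n s g, ¬ ivl B ⊆ ivl C := by
  simp [TA, Finset.mem_filter, and_assoc]

lemma runs_eq_of_snd {S : Finset ℕ} {s : ℕ → Bool} {v : Bool} {B B' : ℕ × ℕ}
    (hB : B ∈ runs S s v) (hB' : B' ∈ runs S s v) (h : B.2 = B'.2) : B = B' := by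
  refine runs_eq_of_mem hB hB' (i := B.2) (mem_ivl.mpr ⟨(mem_runs.mp hB).2.2.1, le_rfl⟩) ?_
  rw [h]
  exact mem_ivl.mpr ⟨(mem_runs.mp hB').2.2.1, le_rfl⟩

lemma runs_eq_of_fst {S : Finset ℕ} {s : ℕ → Bool} {v : Bool} {B B' : ℕ × ℕ}
    (hB : B ∈ runs S s v) (hB' : B' ∈ runs S s v) (h : B.1 = B'.1) : B = B' := by
  refine runs_eq_of_mem hB hB' (i := B.1) (mem_ivl.mpr ⟨le_rfl, (mem_runs.mp hB).2.2.1⟩) ?_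
  rw [h]
  exact mem_ivl.mpr ⟨le_rfl, (mem_runs.mp hB').2.2.1⟩

lemma EA_far {n : ℕ} {g r s : ℕ → Bool} {A : ℕ × ℕ} (hA : A ∈ runs (dom n) g true)
    (hrs : ∀ i ∈ dom n, i ∉ ivl A → r i = s i) {B : ℕ × ℕ}
    (hB : B ∈ EA n r g) (hfar : A.1 ∉ ivl B) : B ∈ EA n s g := by
  obtain ⟨hBdom, ⟨I, hI, hBr⟩, hTpt, hFpt⟩ := mem_EA.mp hB
  obtain ⟨⟨hI1, hI2⟩, b, ⟨hb1, hb2⟩, h0run, h1run⟩ := mem_runs01.mp hI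
  have hdisj : ∀ m ∈ ivl I, m ∉ ivl A := by
    intro m hmI hmA
    have hgm : g m = true := gA_true hA m hmA
    rw [mem_ivl] at hmI
    have h0const := (mem_runs.mp h0run).2.2.2.2.1
    have h1const := (mem_runs.mp h1run).2.2.2.2.1
    have hmgt : b + 1 ≤ m := by
      by_contra hcon
      have := h0const m (mem_ivl.mpr ⟨hmI.1, by omega⟩)
      simp [this] at hgm
    have h1A : (b + 1, I.2) = A :=
      runs_eq_of_mem h1run hA (mem_ivl.mpr ⟨hmgt, hmI.2⟩) hmA
    obtain ⟨j, hj, hgj⟩ := hTpt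
    obtain ⟨i0, hi0, hgi0⟩ := hFpt
    have hsubI : ivl B ⊆ ivl I := (mem_runs.mp hBr).2.2.2.1
    have hi0I := hsubI hi0; rw [mem_ivl] at hi0I
    have hjI := hsubI hj; rw [mem_ivl] at hjI
    have hi0b : i0 ≤ b := by
      by_contra hcon
      have := h1const i0 (mem_ivl.mpr ⟨by omega, hi0I.2⟩)
      simp [this] at hgi0
    have hjb : b + 1 ≤ j := by
      by_contra hcon
      have := h0const j (mem_ivl.mpr ⟨hjI.1, by omega⟩)
      simp [this] at hgj
    rw [mem_ivl] at hi0 hj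
    have hbA : b + 1 = A.1 := (Prod.ext_iff.mp h1A).1
    exact hfar (mem_ivl.mpr ⟨by omega, by omega⟩)
  have hIsub : ivl I ⊆ dom n := by
    rw [ivl]; exact Icc_sub_dom hI1 hI2
  have hcongr : runs (ivl I) r true = runs (ivl I) s true :=
    runs_congr (fun i hi => hrs i (hIsub hi) (hdisj i hi))
  rw [mem_EA]
  exact ⟨hBdom, ⟨I, hI, hcongr ▸ hBr⟩, hTpt, hFpt⟩

lemma LA_far {n : ℕ} {g r s : ℕ → Bool} {A : ℕ × ℕ} (hA : A ∈ runs (dom n) g true)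
    (hrs : ∀ i ∈ dom n, i ∉ ivl A → r i = s i) {B : ℕ × ℕ}
    (hB : B ∈ LA n r g) (hfar : A.2 ∉ ivl B) : B ∈ LA n s g := by
  obtain ⟨hBdom, ⟨I, hI, hBr⟩, hTpt, hFpt⟩ := mem_LA.mp hB
  obtain ⟨⟨hI1, hI2⟩, b, ⟨hb1, hb2⟩, h1run, h0run⟩ := mem_runs10.mp hI
  have hdisj : ∀ m ∈ ivl I, m ∉ ivl A := by
    intro m hmI hmA
    have hgm : g m = true := gA_true hA m hmA
    rw [mem_ivl] at hmI
    have h0const := (mem_runs.mp h0run).2.2.2.2.1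
    have h1const := (mem_runs.mp h1run).2.2.2.2.1
    have hmlt : m ≤ b := by
      by_contra hcon
      have := h0const m (mem_ivl.mpr ⟨by omega, hmI.2⟩)
      simp [this] at hgm
    have h1A : (I.1, b) = A :=
      runs_eq_of_mem h1run hA (mem_ivl.mpr ⟨hmI.1, hmlt⟩) hmA
    obtain ⟨j, hj, hgj⟩ := hTpt
    obtain ⟨i0, hi0, hgi0⟩ := hFpt
    have hsubI : ivl B ⊆ ivl I := (mem_runs.mp hBr).2.2.2.1
    have hi0I := hsubI hi0; rw [mem_ivl] at hi0I
    have hjI := hsubI hj; rw [mem_ivl] at hjI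
    have hi0b : b + 1 ≤ i0 := by
      by_contra hcon
      have := h1const i0 (mem_ivl.mpr ⟨hi0I.1, by omega⟩)
      simp [this] at hgi0
    have hjb : j ≤ b := by
      by_contra hcon
      have := h0const j (mem_ivl.mpr ⟨by omega, hjI.2⟩)
      simp [this] at hgj
    rw [mem_ivl] at hi0 hj
    have hbA : b = A.2 := (Prod.ext_iff.mp h1A).2
    exact hfar (mem_ivl.mpr ⟨by omega, by omega⟩)
  have hIsub : ivl I ⊆ dom n := by
    rw [ivl]; exact Icc_sub_dom hI1 hI2
  have hcongr : runs (ivl I) r true = runs (ivl I) s true :=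
    runs_congr (fun i hi => hrs i (hIsub hi) (hdisj i hi))
  rw [mem_LA]
  exact ⟨hBdom, ⟨I, hI, hcongr ▸ hBr⟩, hTpt, hFpt⟩

lemma TA_far {n : ℕ} {g r s : ℕ → Bool} {A : ℕ × ℕ} (hA : A ∈ runs (dom n) g true)
    (hrs : ∀ i ∈ dom n, i ∉ ivl A → r i = s i) {B : ℕ × ℕ}
    (hB : B ∈ TA n r g) (h1 : B.2 ≠ A.1 - 1) (h2 : B.1 ≠ A.2 + 1) : B ∈ TA n s g := by
  have hsr : ∀ i ∈ dom n, i ∉ ivl A → s i = r i := fun i h h' => (hrs i h h').symm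
  obtain ⟨hBrun, hBg, hBnc⟩ := mem_TA.mp hB
  obtain ⟨hB1d, hB2d, hB12, hBsub, hBconst, hBl, hBr'⟩ := mem_runs.mp hBrun
  have hA12 : A.1 ≤ A.2 := (mem_runs.mp hA).2.2.1
  have hA1n : A.1 ≤ n := (mem_dom.mp ((mem_runs.mp hA).1)).2
  have hnotA : ∀ i ∈ ivl B, i ∉ ivl A := by
    intro i hi hiA
    have ht := gA_true hA i hiA
    rw [hBg i hi] at ht
    cases ht
  have hB1A : B.1 ∉ ivl A := hnotA B.1 (mem_ivl.mpr ⟨le_rfl, hB12⟩)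
  have hB2A : B.2 ∉ ivl A := hnotA B.2 (mem_ivl.mpr ⟨hB12, le_rfl⟩)
  rw [mem_ivl] at hB1A hB2A
  have hBrun' : B ∈ runs (dom n) s true := by
    rw [mem_runs]
    refine ⟨hB1d, hB2d, hB12, hBsub, ?_, ?_, ?_⟩
    · intro i hi; rw [← hrs i (hBsub hi) (hnotA i hi)]; exact hBconst i hi
    · intro hm
      have hno : B.1 - 1 ∉ ivl A := by
        intro hc; rw [mem_ivl] at hc; omega
      rw [← hrs _ hm hno]; exact hBl hm
    · intro hm
      have hno : B.2 + 1 ∉ ivl A := by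
        intro hc; rw [mem_ivl] at hc; omega
      rw [← hrs _ hm hno]; exact hBr' hm
  rw [mem_TA]
  refine ⟨hBrun', hBg, ?_⟩
  intro C hC hsubC
  rw [Finset.mem_union] at hC
  rcases hC with hCE | hCL
  · by_cases htouch : A.1 ∈ ivl C
    · obtain ⟨lam, hl0, hCr, hCm1, hCm2, hA1ge2⟩ :=
        EA_touch hA hCE ⟨A.1, Finset.mem_inter.mpr ⟨htouch, mem_ivl.mpr ⟨le_rfl, hA12⟩⟩⟩
      have hCsub : ivl C ⊆ Finset.Icc lam A.2 := (mem_runs.mp hCr).2.2.2.1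
      have hCconst : ∀ i ∈ ivl C, s i = true := (mem_runs.mp hCr).2.2.2.2.1
      rw [mem_ivl] at hCm2
      have hmB2 : B.2 ∈ ivl C := hsubC (mem_ivl.mpr ⟨hB12, le_rfl⟩)
      have hmB2' := hCsub hmB2
      rw [Finset.mem_Icc] at hmB2'
      have hB2lt : B.2 + 1 ≤ A.1 - 1 := by omega
      have hmem : B.2 + 1 ∈ ivl C := by
        rw [mem_ivl] at hmB2 ⊢; omega
      have hs : s (B.2 + 1) = true := hCconst _ hmem
      have hr : r (B.2 + 1) = true := by
        rw [hrs (B.2 + 1) (mem_dom.mpr ⟨by omega, by omega⟩)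
          (by rw [mem_ivl]; omega)]
        exact hs
      exact (hBr' (mem_dom.mpr ⟨by omega, by omega⟩)) hr
    · exact hBnc C (Finset.mem_union.mpr (Or.inl (EA_far hA hsr hCE htouch))) hsubC
  · by_cases htouch : A.2 ∈ ivl C
    · obtain ⟨rho, hr0, hCr, hCm1, hCm2, hA2n⟩ :=
        LA_touch hA hCL ⟨A.2, Finset.mem_inter.mpr ⟨htouch, mem_ivl.mpr ⟨hA12, le_rfl⟩⟩⟩
      have hCsub : ivl C ⊆ Finset.Icc A.1 rho := (mem_runs.mp hCr).2.2.2.1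
      have hCconst : ∀ i ∈ ivl C, s i = true := (mem_runs.mp hCr).2.2.2.2.1
      rw [mem_ivl] at hCm1
      have hmB1 : B.1 ∈ ivl C := hsubC (mem_ivl.mpr ⟨le_rfl, hB12⟩)
      have hmB1' := hCsub hmB1
      rw [Finset.mem_Icc] at hmB1'
      have hB1gt : A.2 + 2 ≤ B.1 := by omega
      have hmem : B.1 - 1 ∈ ivl C := by
        rw [mem_ivl] at hmB1 ⊢; omega
      have hs : s (B.1 - 1) = true := hCconst _ hmem
      have hB2n : B.2 ≤ n := (mem_dom.mp hB2d).2
      have hr : r (B.1 - 1) = true := by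
        rw [hrs (B.1 - 1) (mem_dom.mpr ⟨by omega, by omega⟩)
          (by rw [mem_ivl]; omega)]
        exact hs
      exact (hBl (mem_dom.mpr ⟨by omega, by omega⟩)) hr
    · exact hBnc C (Finset.mem_union.mpr (Or.inr (LA_far hA hsr hCL htouch))) hsubC

lemma q_cov {n : ℕ} {g q : ℕ → Bool} {A : ℕ × ℕ} (hA : A ∈ runs (dom n) g true)
    (hAq : A ∉ DA n q g) {i : ℕ} (hi : i ∈ ivl A) (hqi : q i = true) :
    ∃ j, j < A.1 ∧ g j = true ∧ ∀ m, j ≤ m → m ≤ i → q m = true := by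
  have hivlsub : ivl A ⊆ dom n := (mem_runs.mp hA).2.2.2.1
  have hidom := hivlsub hi
  rw [mem_dom] at hidom
  obtain ⟨B, hBr, hBi⟩ := runs_exists (a := 1) (b := n) le_rfl
    (Finset.mem_Icc.mpr hidom) hqi
  rw [← dom_eq] at hBr
  rw [DA, Finset.mem_filter] at hAq
  push_neg at hAq
  obtain ⟨hB1A, j, hjmem, hgj⟩ := hAq hA B hBr ⟨i, Finset.mem_inter.mpr ⟨hBi, hi⟩⟩
  rw [Finset.mem_Ico] at hjmem
  rw [mem_ivl] at hBi hi
  have hgjt : g j = true := by simpa using hgj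
  refine ⟨j, hjmem.2, hgjt, fun m hm1 hm2 => ?_⟩
  exact (mem_runs.mp hBr).2.2.2.2.1 m (mem_ivl.mpr ⟨by omega, by omega⟩)

lemma F1 {n : ℕ} {g p q : ℕ → Bool} {A : ℕ × ℕ}
    (hA : A ∈ runs (dom n) g true)
    (hEL : ∀ B ∈ EA n p g ∪ LA n p g, (ivl B ∩ ivl A).Nonempty →
      ∃ C ∈ TA n q g, ivl C = (ivl B).filter (fun i => g i = false))
    {B : ℕ × ℕ} (hB : B ∈ EA n p g) (hBA : A.1 ∈ ivl B) :
    (∃ C ∈ TA n q g, C.2 = A.1 - 1) ∧ (∀ T ∈ TA n p g, T.2 ≠ A.1 - 1) ∧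
    (∀ B' ∈ EA n q g, A.1 ∉ ivl B') ∧ q A.1 = false := by
  have hA12 : A.1 ≤ A.2 := (mem_runs.mp hA).2.2.1
  have hA1A : A.1 ∈ ivl A := mem_ivl.mpr ⟨le_rfl, hA12⟩
  have hA1dom : A.1 ∈ dom n := (mem_runs.mp hA).1
  obtain ⟨lam, hl0, hBr, hm1, hm2, h2A⟩ :=
    EA_touch hA hB ⟨A.1, Finset.mem_inter.mpr ⟨hBA, hA1A⟩⟩
  obtain ⟨C, hC, hCivl⟩ := hEL B (Finset.mem_union.mpr (Or.inl hB))
    ⟨A.1, Finset.mem_inter.mpr ⟨hBA, hA1A⟩⟩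
  have hgl : g (A.1 - 1) = false := gA_left hA h2A
  have hmemC : A.1 - 1 ∈ ivl C := by
    rw [hCivl, Finset.mem_filter]; exact ⟨hm1, hgl⟩
  have hCrun := (mem_TA.mp hC).1
  have hC2 : C.2 = A.1 - 1 := by
    rw [mem_ivl] at hmemC
    by_contra hne
    have hmem : A.1 ∈ ivl C := mem_ivl.mpr ⟨by omega, by omega⟩
    rw [hCivl, Finset.mem_filter] at hmem
    have := hmem.2
    rw [gA_true hA A.1 hA1A] at this
    cases this
  have hqA1 : q A.1 = false := by
    have hmax := (mem_runs.mp hCrun).2.2.2.2.2.2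
    rw [hC2] at hmax
    have h11 : A.1 - 1 + 1 = A.1 := by omega
    rw [h11] at hmax
    have := hmax hA1dom
    simpa using this
  have hpA1 : p A.1 = true := (mem_runs.mp hBr).2.2.2.2.1 A.1 hm2
  refine ⟨⟨C, hC, hC2⟩, ?_, ?_, hqA1⟩
  · intro T hT hT2
    have hmax := (mem_runs.mp (mem_TA.mp hT).1).2.2.2.2.2.2
    rw [hT2] at hmax
    have h11 : A.1 - 1 + 1 = A.1 := by omega
    rw [h11] at hmax
    exact hmax hA1dom hpA1
  · intro B' hB' hB'A
    obtain ⟨lam', _, hB'r, _, hm2', _⟩ :=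
      EA_touch hA hB' ⟨A.1, Finset.mem_inter.mpr ⟨hB'A, hA1A⟩⟩
    have : q A.1 = true := (mem_runs.mp hB'r).2.2.2.2.1 A.1 hm2'
    rw [hqA1] at this
    cases this

lemma F2 {n : ℕ} {g p q : ℕ → Bool} {A : ℕ × ℕ}
    (hA : A ∈ runs (dom n) g true)
    (hEL : ∀ B ∈ EA n p g ∪ LA n p g, (ivl B ∩ ivl A).Nonempty →
      ∃ C ∈ TA n q g, ivl C = (ivl B).filter (fun i => g i = false))
    {B : ℕ × ℕ} (hB : B ∈ LA n p g) (hBA : A.2 ∈ ivl B) :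
    (∃ C ∈ TA n q g, C.1 = A.2 + 1) ∧ (∀ T ∈ TA n p g, T.1 ≠ A.2 + 1) ∧
    (∀ B' ∈ LA n q g, A.2 ∉ ivl B') ∧ q A.2 = false := by
  have hA12 : A.1 ≤ A.2 := (mem_runs.mp hA).2.2.1
  have hA2A : A.2 ∈ ivl A := mem_ivl.mpr ⟨hA12, le_rfl⟩
  have hA2dom : A.2 ∈ dom n := (mem_runs.mp hA).2.1
  obtain ⟨rho, hr0, hBr, hm1, hm2, hA2n⟩ :=
    LA_touch hA hB ⟨A.2, Finset.mem_inter.mpr ⟨hBA, hA2A⟩⟩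
  obtain ⟨C, hC, hCivl⟩ := hEL B (Finset.mem_union.mpr (Or.inr hB))
    ⟨A.2, Finset.mem_inter.mpr ⟨hBA, hA2A⟩⟩
  have hgr : g (A.2 + 1) = false := gA_right hA hA2n
  have hmemC : A.2 + 1 ∈ ivl C := by
    rw [hCivl, Finset.mem_filter]; exact ⟨hm2, hgr⟩
  have hCrun := (mem_TA.mp hC).1
  have hC1 : C.1 = A.2 + 1 := by
    rw [mem_ivl] at hmemC
    by_contra hne
    have hmem : A.2 ∈ ivl C := mem_ivl.mpr ⟨by omega, by omega⟩
    rw [hCivl, Finset.mem_filter] at hmem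
    have := hmem.2
    rw [gA_true hA A.2 hA2A] at this
    cases this
  have hqA2 : q A.2 = false := by
    have hmax := (mem_runs.mp hCrun).2.2.2.2.2.1
    rw [hC1] at hmax
    have h11 : A.2 + 1 - 1 = A.2 := by omega
    rw [h11] at hmax
    have := hmax hA2dom
    simpa using this
  have hpA2 : p A.2 = true := (mem_runs.mp hBr).2.2.2.2.1 A.2 hm1
  refine ⟨⟨C, hC, hC1⟩, ?_, ?_, hqA2⟩
  · intro T hT hT1
    have hmax := (mem_runs.mp (mem_TA.mp hT).1).2.2.2.2.2.1
    rw [hT1] at hmax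
    have h11 : A.2 + 1 - 1 = A.2 := by omega
    rw [h11] at hmax
    exact hmax hA2dom hpA2
  · intro B' hB' hB'A
    obtain ⟨rho', _, hB'r, hm1', _, _⟩ :=
      LA_touch hA hB' ⟨A.2, Finset.mem_inter.mpr ⟨hB'A, hA2A⟩⟩
    have : q A.2 = true := (mem_runs.mp hB'r).2.2.2.2.1 A.2 hm1'
    rw [hqA2] at this
    cases this

lemma F3 {n : ℕ} {g p q : ℕ → Bool} {A : ℕ × ℕ}
    (hA : A ∈ runs (dom n) g true)
    (hpq : ∀ i ∈ dom n, i ∉ ivl A → p i = q i)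
    {T : ℕ × ℕ} (hT : T ∈ TA n p g) (hT2 : T.2 = A.1 - 1) :
    (∃ C ∈ TA n q g, C.2 = A.1 - 1) ∨ (∃ B ∈ EA n q g, A.1 ∈ ivl B) := by
  have hqp : ∀ i ∈ dom n, i ∉ ivl A → q i = p i := fun i h h' => (hpq i h h').symm
  obtain ⟨hTrun, hTg, hTnc⟩ := mem_TA.mp hT
  obtain ⟨hT1d, hT2d, hT12, hTsub, hTconst, hTl, hTr⟩ := mem_runs.mp hTrun
  have hA12 : A.1 ≤ A.2 := (mem_runs.mp hA).2.2.1
  have hA1dom : A.1 ∈ dom n := (mem_runs.mp hA).1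
  have hA1n : A.1 ≤ n := (mem_dom.mp hA1dom).2
  have hT11 : 1 ≤ T.1 := (mem_dom.mp hT1d).1
  have h2A : 2 ≤ A.1 := by omega
  have hpA1 : p A.1 = false := by
    have := hTr
    rw [hT2] at this
    have h11 : A.1 - 1 + 1 = A.1 := by omega
    rw [h11] at this
    simpa using this hA1dom
  have hpm1 : p (A.1 - 1) = true := by
    have := hTconst T.2 (mem_ivl.mpr ⟨hT12, le_rfl⟩)
    rwa [hT2] at this
  have hm1dom : A.1 - 1 ∈ dom n := mem_dom.mpr ⟨by omega, by omega⟩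
  have hm1notA : A.1 - 1 ∉ ivl A := by rw [mem_ivl]; omega
  have hqm1 : q (A.1 - 1) = true := by rw [← hpq _ hm1dom hm1notA]; exact hpm1
  cases hq : q A.1 with
  | true => exact Or.inr (EA_build hA h2A hqm1 hq)
  | false =>
    left
    refine ⟨T, ?_, hT2⟩
    have hnotA : ∀ i ∈ ivl T, i ∉ ivl A := by
      intro i hi hiA
      rw [mem_ivl] at hi hiA
      omega
    have hTrunq : T ∈ runs (dom n) q true := by
      rw [mem_runs]
      refine ⟨hT1d, hT2d, hT12, hTsub, ?_, ?_, ?_⟩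
      · intro i hi; rw [← hpq i (hTsub hi) (hnotA i hi)]; exact hTconst i hi
      · intro hm
        have hno : T.1 - 1 ∉ ivl A := by rw [mem_ivl]; omega
        rw [← hpq _ hm hno]; exact hTl hm
      · intro hm
        rw [hT2]
        have h11 : A.1 - 1 + 1 = A.1 := by omega
        rw [h11]
        simp [hq]
    rw [mem_TA]
    refine ⟨hTrunq, hTg, ?_⟩
    intro C hC hsubC
    rw [Finset.mem_union] at hC
    rcases hC with hCE | hCL
    · by_cases htouch : A.1 ∈ ivl C
      · obtain ⟨lam, _, hCr, _, hm2', _⟩ :=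
          EA_touch hA hCE ⟨A.1, Finset.mem_inter.mpr ⟨htouch, mem_ivl.mpr ⟨le_rfl, hA12⟩⟩⟩
        have : q A.1 = true := (mem_runs.mp hCr).2.2.2.2.1 A.1 hm2'
        rw [hq] at this
        cases this
      · exact hTnc C (Finset.mem_union.mpr (Or.inl (EA_far hA hqp hCE htouch))) hsubC
    · by_cases htouch : A.2 ∈ ivl C
      · obtain ⟨rho, _, hCr, _, _, _⟩ :=
          LA_touch hA hCL ⟨A.2, Finset.mem_inter.mpr ⟨htouch, mem_ivl.mpr ⟨hA12, le_rfl⟩⟩⟩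
        have hCsub : ivl C ⊆ Finset.Icc A.1 rho := (mem_runs.mp hCr).2.2.2.1
        have := hCsub (hsubC (mem_ivl.mpr ⟨hT12, le_rfl⟩))
        rw [Finset.mem_Icc] at this
        omega
      · exact hTnc C (Finset.mem_union.mpr (Or.inr (LA_far hA hqp hCL htouch))) hsubC

lemma F4 {n : ℕ} {g p q : ℕ → Bool} {A : ℕ × ℕ}
    (hA : A ∈ runs (dom n) g true)
    (hpq : ∀ i ∈ dom n, i ∉ ivl A → p i = q i)
    {T : ℕ × ℕ} (hT : T ∈ TA n p g) (hT1 : T.1 = A.2 + 1) :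
    (∃ C ∈ TA n q g, C.1 = A.2 + 1) ∨ (∃ B ∈ LA n q g, A.2 ∈ ivl B) := by
  have hqp : ∀ i ∈ dom n, i ∉ ivl A → q i = p i := fun i h h' => (hpq i h h').symm
  obtain ⟨hTrun, hTg, hTnc⟩ := mem_TA.mp hT
  obtain ⟨hT1d, hT2d, hT12, hTsub, hTconst, hTl, hTr⟩ := mem_runs.mp hTrun
  have hA12 : A.1 ≤ A.2 := (mem_runs.mp hA).2.2.1
  have hA2dom : A.2 ∈ dom n := (mem_runs.mp hA).2.1
  have hA2n1 : A.2 + 1 ≤ n := by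
    have := (mem_dom.mp hT1d).2
    omega
  have hpA2 : p A.2 = false := by
    have := hTl
    rw [hT1] at this
    have h11 : A.2 + 1 - 1 = A.2 := by omega
    rw [h11] at this
    simpa using this hA2dom
  have hpm1 : p (A.2 + 1) = true := by
    have := hTconst T.1 (mem_ivl.mpr ⟨le_rfl, hT12⟩)
    rwa [hT1] at this
  have hm1dom : A.2 + 1 ∈ dom n := mem_dom.mpr ⟨by omega, hA2n1⟩
  have hm1notA : A.2 + 1 ∉ ivl A := by rw [mem_ivl]; omega
  have hqm1 : q (A.2 + 1) = true := by rw [← hpq _ hm1dom hm1notA]; exact hpm1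
  cases hq : q A.2 with
  | true => exact Or.inr (LA_build hA hA2n1 hq hqm1)
  | false =>
    left
    refine ⟨T, ?_, hT1⟩
    have hnotA : ∀ i ∈ ivl T, i ∉ ivl A := by
      intro i hi hiA
      rw [mem_ivl] at hi hiA
      omega
    have hTrunq : T ∈ runs (dom n) q true := by
      rw [mem_runs]
      refine ⟨hT1d, hT2d, hT12, hTsub, ?_, ?_, ?_⟩
      · intro i hi; rw [← hpq i (hTsub hi) (hnotA i hi)]; exact hTconst i hi
      · intro hm
        rw [hT1]
        have h11 : A.2 + 1 - 1 = A.2 := by omega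
        rw [h11]
        simp [hq]
      · intro hm
        have hno : T.2 + 1 ∉ ivl A := by rw [mem_ivl]; omega
        rw [← hpq _ hm hno]; exact hTr hm
    rw [mem_TA]
    refine ⟨hTrunq, hTg, ?_⟩
    intro C hC hsubC
    rw [Finset.mem_union] at hC
    rcases hC with hCE | hCL
    · by_cases htouch : A.1 ∈ ivl C
      · obtain ⟨lam, _, hCr, _, _, _⟩ :=
          EA_touch hA hCE ⟨A.1, Finset.mem_inter.mpr ⟨htouch, mem_ivl.mpr ⟨le_rfl, hA12⟩⟩⟩
        have hCsub : ivl C ⊆ Finset.Icc lam A.2 := (mem_runs.mp hCr).2.2.2.1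
        have := hCsub (hsubC (mem_ivl.mpr ⟨le_rfl, hT12⟩))
        rw [Finset.mem_Icc] at this
        omega
      · exact hTnc C (Finset.mem_union.mpr (Or.inl (EA_far hA hqp hCE htouch))) hsubC
    · by_cases htouch : A.2 ∈ ivl C
      · obtain ⟨rho, _, hCr, hm1', _, _⟩ :=
          LA_touch hA hCL ⟨A.2, Finset.mem_inter.mpr ⟨htouch, mem_ivl.mpr ⟨hA12, le_rfl⟩⟩⟩
        have : q A.2 = true := (mem_runs.mp hCr).2.2.2.2.1 A.2 hm1'
        rw [hq] at this
        cases this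
      · exact hTnc C (Finset.mem_union.mpr (Or.inr (LA_far hA hqp hCL htouch))) hsubC

lemma penalty_count {n : ℕ} {g p q : ℕ → Bool} {A : ℕ × ℕ}
    (hA : A ∈ runs (dom n) g true)
    (hpq : ∀ i ∈ dom n, i ∉ ivl A → p i = q i)
    (hAq : A ∉ DA n q g)
    (hEL : ∀ B ∈ EA n p g ∪ LA n p g, (ivl B ∩ ivl A).Nonempty →
      ∃ C ∈ TA n q g, ivl C = (ivl B).filter (fun i => g i = false)) :
    2 * (TA n p g).card + 3 * (EA n p g).card + (LA n p g).card ≤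
      2 * (TA n q g).card + 3 * (EA n q g).card + (LA n q g).card + 1 := by
  classical
  have hqp : ∀ i ∈ dom n, i ∉ ivl A → q i = p i := fun i h h' => (hpq i h h').symm
  have hA12 : A.1 ≤ A.2 := (mem_runs.mp hA).2.2.1
  -- split EA
  have hsplitEP := Finset.card_filter_add_card_filter_not
    (s := EA n p g) (p := fun B => A.1 ∈ ivl B)
  have hsplitEQ := Finset.card_filter_add_card_filter_not
    (s := EA n q g) (p := fun B => A.1 ∈ ivl B)
  have hsplitLP := Finset.card_filter_add_card_filter_not
    (s := LA n p g) (p := fun B => A.2 ∈ ivl B)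
  have hsplitLQ := Finset.card_filter_add_card_filter_not
    (s := LA n q g) (p := fun B => A.2 ∈ ivl B)
  have hsplitTP := Finset.card_filter_add_card_filter_not
    (s := TA n p g) (p := fun B => B.2 = A.1 - 1)
  have hsplitTQ := Finset.card_filter_add_card_filter_not
    (s := TA n q g) (p := fun B => B.2 = A.1 - 1)
  have hsplitTP2 := Finset.card_filter_add_card_filter_not
    (s := (TA n p g).filter (fun B => ¬ B.2 = A.1 - 1)) (p := fun B => B.1 = A.2 + 1)
  have hsplitTQ2 := Finset.card_filter_add_card_filter_not
    (s := (TA n q g).filter (fun B => ¬ B.2 = A.1 - 1)) (p := fun B => B.1 = A.2 + 1)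
  rw [Finset.filter_filter, Finset.filter_filter] at hsplitTP2 hsplitTQ2
  -- far sets are equal
  have hEfar : (EA n p g).filter (fun B => ¬ A.1 ∈ ivl B)
      = (EA n q g).filter (fun B => ¬ A.1 ∈ ivl B) := by
    ext B
    simp only [Finset.mem_filter]
    exact ⟨fun ⟨h1, h2⟩ => ⟨EA_far hA hpq h1 h2, h2⟩,
      fun ⟨h1, h2⟩ => ⟨EA_far hA hqp h1 h2, h2⟩⟩
  have hLfar : (LA n p g).filter (fun B => ¬ A.2 ∈ ivl B)
      = (LA n q g).filter (fun B => ¬ A.2 ∈ ivl B) := by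
    ext B
    simp only [Finset.mem_filter]
    exact ⟨fun ⟨h1, h2⟩ => ⟨LA_far hA hpq h1 h2, h2⟩,
      fun ⟨h1, h2⟩ => ⟨LA_far hA hqp h1 h2, h2⟩⟩
  have hTfar : (TA n p g).filter (fun B => ¬ B.2 = A.1 - 1 ∧ ¬ B.1 = A.2 + 1)
      = (TA n q g).filter (fun B => ¬ B.2 = A.1 - 1 ∧ ¬ B.1 = A.2 + 1) := by
    ext B
    simp only [Finset.mem_filter]
    exact ⟨fun ⟨h1, h2⟩ => ⟨TA_far hA hpq h1 h2.1 h2.2, h2⟩,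
      fun ⟨h1, h2⟩ => ⟨TA_far hA hqp h1 h2.1 h2.2, h2⟩⟩
  -- bounds
  have hePle : ((EA n p g).filter (fun B => A.1 ∈ ivl B)).card ≤ 1 := by
    rw [Finset.card_le_one]
    intro a ha b hb
    rw [Finset.mem_filter] at ha hb
    exact EA_touch_unique hA ha.1 hb.1 ha.2 hb.2
  have heQle : ((EA n q g).filter (fun B => A.1 ∈ ivl B)).card ≤ 1 := by
    rw [Finset.card_le_one]
    intro a ha b hb
    rw [Finset.mem_filter] at ha hb
    exact EA_touch_unique hA ha.1 hb.1 ha.2 hb.2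
  have hlPle : ((LA n p g).filter (fun B => A.2 ∈ ivl B)).card ≤ 1 := by
    rw [Finset.card_le_one]
    intro a ha b hb
    rw [Finset.mem_filter] at ha hb
    exact LA_touch_unique hA ha.1 hb.1 ha.2 hb.2
  have hlQle : ((LA n q g).filter (fun B => A.2 ∈ ivl B)).card ≤ 1 := by
    rw [Finset.card_le_one]
    intro a ha b hb
    rw [Finset.mem_filter] at ha hb
    exact LA_touch_unique hA ha.1 hb.1 ha.2 hb.2
  have htLPle : ((TA n p g).filter (fun B => B.2 = A.1 - 1)).card ≤ 1 := by
    rw [Finset.card_le_one]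
    intro a ha b hb
    rw [Finset.mem_filter] at ha hb
    exact runs_eq_of_snd (mem_TA.mp ha.1).1 (mem_TA.mp hb.1).1 (ha.2.trans hb.2.symm)
  have htLQle : ((TA n q g).filter (fun B => B.2 = A.1 - 1)).card ≤ 1 := by
    rw [Finset.card_le_one]
    intro a ha b hb
    rw [Finset.mem_filter] at ha hb
    exact runs_eq_of_snd (mem_TA.mp ha.1).1 (mem_TA.mp hb.1).1 (ha.2.trans hb.2.symm)
  have htRPle : ((TA n p g).filter (fun B => ¬ B.2 = A.1 - 1 ∧ B.1 = A.2 + 1)).card ≤ 1 := by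
    rw [Finset.card_le_one]
    intro a ha b hb
    rw [Finset.mem_filter] at ha hb
    exact runs_eq_of_fst (mem_TA.mp ha.1).1 (mem_TA.mp hb.1).1 (ha.2.2.trans hb.2.2.symm)
  have htRQle : ((TA n q g).filter (fun B => ¬ B.2 = A.1 - 1 ∧ B.1 = A.2 + 1)).card ≤ 1 := by
    rw [Finset.card_le_one]
    intro a ha b hb
    rw [Finset.mem_filter] at ha hb
    exact runs_eq_of_fst (mem_TA.mp ha.1).1 (mem_TA.mp hb.1).1 (ha.2.2.trans hb.2.2.symm)
  -- helper : a TA element with C.1 = A.2+1 has C.2 ≠ A.1 - 1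
  have hnotboth : ∀ C ∈ TA n q g, C.1 = A.2 + 1 → ¬ C.2 = A.1 - 1 := by
    intro C hC h1 h2
    have := (mem_runs.mp (mem_TA.mp hC).1).2.2.1
    omega
  have hnotbothP : ∀ C ∈ TA n p g, C.1 = A.2 + 1 → ¬ C.2 = A.1 - 1 := by
    intro C hC h1 h2
    have := (mem_runs.mp (mem_TA.mp hC).1).2.2.1
    omega
  -- F1 in card form
  have hF1 : ((EA n p g).filter (fun B => A.1 ∈ ivl B)).card ≠ 0 →
      ((TA n q g).filter (fun B => B.2 = A.1 - 1)).card ≠ 0 ∧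
      ((TA n p g).filter (fun B => B.2 = A.1 - 1)).card = 0 ∧
      ((EA n q g).filter (fun B => A.1 ∈ ivl B)).card = 0 ∧ q A.1 = false := by
    intro h
    obtain ⟨B, hB⟩ := Finset.card_pos.mp (Nat.pos_of_ne_zero h)
    rw [Finset.mem_filter] at hB
    obtain ⟨⟨C, hC, hC2⟩, hP0, hQ0, hqA1⟩ := F1 hA hEL hB.1 hB.2
    refine ⟨Finset.card_ne_zero_of_mem (Finset.mem_filter.mpr ⟨hC, hC2⟩), ?_, ?_, hqA1⟩
    · rw [Finset.card_eq_zero, Finset.filter_eq_empty_iff]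
      exact fun T hT => hP0 T hT
    · rw [Finset.card_eq_zero, Finset.filter_eq_empty_iff]
      exact fun B' hB' => hQ0 B' hB'
  have hF2 : ((LA n p g).filter (fun B => A.2 ∈ ivl B)).card ≠ 0 →
      ((TA n q g).filter (fun B => ¬ B.2 = A.1 - 1 ∧ B.1 = A.2 + 1)).card ≠ 0 ∧
      ((TA n p g).filter (fun B => ¬ B.2 = A.1 - 1 ∧ B.1 = A.2 + 1)).card = 0 ∧
      ((LA n q g).filter (fun B => A.2 ∈ ivl B)).card = 0 := by
    intro h
    obtain ⟨B, hB⟩ := Finset.card_pos.mp (Nat.pos_of_ne_zero h)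
    rw [Finset.mem_filter] at hB
    obtain ⟨⟨C, hC, hC1⟩, hP0, hQ0, hqA2⟩ := F2 hA hEL hB.1 hB.2
    refine ⟨Finset.card_ne_zero_of_mem
      (Finset.mem_filter.mpr ⟨hC, hnotboth C hC hC1, hC1⟩), ?_, ?_⟩
    · rw [Finset.card_eq_zero, Finset.filter_eq_empty_iff]
      exact fun T hT hcon => hP0 T hT hcon.2
    · rw [Finset.card_eq_zero, Finset.filter_eq_empty_iff]
      exact fun B' hB' => hQ0 B' hB'
  have hF3 : ((TA n p g).filter (fun B => B.2 = A.1 - 1)).card ≠ 0 →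
      ((TA n q g).filter (fun B => B.2 = A.1 - 1)).card ≠ 0 ∨
      ((EA n q g).filter (fun B => A.1 ∈ ivl B)).card ≠ 0 := by
    intro h
    obtain ⟨T, hT⟩ := Finset.card_pos.mp (Nat.pos_of_ne_zero h)
    rw [Finset.mem_filter] at hT
    rcases F3 hA hpq hT.1 hT.2 with ⟨C, hC, hC2⟩ | ⟨B, hB, hB1⟩
    · exact Or.inl (Finset.card_ne_zero_of_mem (Finset.mem_filter.mpr ⟨hC, hC2⟩))
    · exact Or.inr (Finset.card_ne_zero_of_mem (Finset.mem_filter.mpr ⟨hB, hB1⟩))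
  have hF4 : ((TA n p g).filter (fun B => ¬ B.2 = A.1 - 1 ∧ B.1 = A.2 + 1)).card ≠ 0 →
      ((TA n q g).filter (fun B => ¬ B.2 = A.1 - 1 ∧ B.1 = A.2 + 1)).card ≠ 0 ∨
      ((LA n q g).filter (fun B => A.2 ∈ ivl B)).card ≠ 0 := by
    intro h
    obtain ⟨T, hT⟩ := Finset.card_pos.mp (Nat.pos_of_ne_zero h)
    rw [Finset.mem_filter] at hT
    rcases F4 hA hpq hT.1 hT.2.2 with ⟨C, hC, hC1⟩ | ⟨B, hB, hB1⟩
    · exact Or.inl (Finset.card_ne_zero_of_mem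
        (Finset.mem_filter.mpr ⟨hC, hnotboth C hC hC1, hC1⟩))
    · exact Or.inr (Finset.card_ne_zero_of_mem (Finset.mem_filter.mpr ⟨hB, hB1⟩))
  -- F5'
  have hF5 : ¬(((EA n p g).filter (fun B => A.1 ∈ ivl B)).card ≠ 0 ∧
      ((LA n q g).filter (fun B => A.2 ∈ ivl B)).card ≠ 0) := by
    rintro ⟨h1, h2⟩
    obtain ⟨_, _, _, hqA1⟩ := hF1 h1
    obtain ⟨B, hB⟩ := Finset.card_pos.mp (Nat.pos_of_ne_zero h2)
    rw [Finset.mem_filter] at hB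
    have hA2A : A.2 ∈ ivl A := mem_ivl.mpr ⟨hA12, le_rfl⟩
    obtain ⟨rho, _, hBr, hm1, _, _⟩ :=
      LA_touch hA hB.1 ⟨A.2, Finset.mem_inter.mpr ⟨hB.2, hA2A⟩⟩
    have hqA2 : q A.2 = true := (mem_runs.mp hBr).2.2.2.2.1 A.2 hm1
    obtain ⟨j, hj1, _, hjq⟩ := q_cov hA hAq hA2A hqA2
    have : q A.1 = true := hjq A.1 (by omega) hA12
    rw [hqA1] at this
    cases this
  have hEfarc := congrArg Finset.card hEfar
  have hLfarc := congrArg Finset.card hLfar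
  have hTfarc := congrArg Finset.card hTfar
  omega

lemma mem_DA {n : ℕ} {p g : ℕ → Bool} {B : ℕ × ℕ} :
    B ∈ DA n p g ↔ B ∈ runs (dom n) g true ∧
      ∃ C ∈ runs (dom n) p true, (ivl C ∩ ivl B).Nonempty ∧
        (C.1 ∈ ivl B ∨ ∀ i ∈ Finset.Ico C.1 B.1, g i = false) := by
  simp [DA, Finset.mem_filter]

/-- ALARM satisfies the advanced Detection of Anomalies property. -/
theorem alarm_detection (n : ℕ) (hn : 1 ≤ n)
    (α : Finset ℕ → (ℕ → Bool) → ℝ) (β : ℕ → ℝ)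
    (hα : AlphaSpec α) (hβ : BetaSpec β)
    (t : ℕ) (ht : 1 ≤ t)
    (g p q : ℕ → Bool) (A : ℕ × ℕ) (hA : A ∈ runs (dom n) g true)
    (hpq : ∀ i ∈ dom n, i ∉ ivl A → p i = q i)
    (hDA : DA n p g = insert A (DA n q g)) (hAq : A ∉ DA n q g)
    (hEL : ∀ B ∈ EA n p g ∪ LA n p g, (ivl B ∩ ivl A).Nonempty →
      ∃ C ∈ TA n q g, ivl C = (ivl B).filter (fun i => g i = false)) :
    ALARM n t α β g p > ALARM n t α β g q := by
  classical
  -- β terms agree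
  have hβset : ((dom n).filter (fun i => p i = true ∧ g i = false)) =
      ((dom n).filter (fun i => q i = true ∧ g i = false)) := by
    apply Finset.filter_congr
    intro i hi
    by_cases hiA : i ∈ ivl A
    · have hg : g i = true := gA_true hA i hiA
      simp [hg]
    · rw [hpq i hi hiA]
  have hβe : β (((dom n).filter (fun i => p i = true ∧ g i = false)).card) =
      β (((dom n).filter (fun i => q i = true ∧ g i = false)).card) := by
    rw [hβset]
  -- DA cardinality
  have hDAc : (DA n p g).card = (DA n q g).card + 1 := by
    rw [hDA, Finset.card_insert_of_notMem hAq]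
  have hkcast : ((DA n p g).card : ℝ) = ((DA n q g).card : ℝ) + 1 := by
    rw [hDAc]; push_cast; ring
  -- terms over DA q agree for p and q
  have htermeq : ∀ W ∈ DA n q g,
      (α (ivl W) p + 1) / 2 ^ ((runs (ivl W) p true).card) =
      (α (ivl W) q + 1) / 2 ^ ((runs (ivl W) q true).card) := by
    intro W hW
    have hWrun : W ∈ runs (dom n) g true := (mem_DA.mp hW).1
    have hne : W ≠ A := fun h => hAq (h ▸ hW)
    have hdisj : ∀ i ∈ ivl W, i ∉ ivl A := fun i hi hiA =>
      hne (runs_eq_of_mem hWrun hA hi hiA)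
    have hWsub : ivl W ⊆ dom n := (mem_runs.mp hWrun).2.2.2.1
    have hagree : ∀ i ∈ ivl W, p i = q i := fun i hi =>
      hpq i (hWsub hi) (hdisj i hi)
    rw [hα.restrict (ivl W) p q hagree, runs_congr hagree]
  have hsum : (∑ W ∈ DA n p g, (α (ivl W) p + 1) / 2 ^ ((runs (ivl W) p true).card))
      = (α (ivl A) p + 1) / 2 ^ ((runs (ivl A) p true).card)
        + ∑ W ∈ DA n q g, (α (ivl W) q + 1) / 2 ^ ((runs (ivl W) q true).card) := by
    rw [hDA, Finset.sum_insert hAq]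
    congr 1
    exact Finset.sum_congr rfl htermeq
  -- bounds on terms
  have htermA : 0 < (α (ivl A) p + 1) / 2 ^ ((runs (ivl A) p true).card) := by
    have h0 := (hα.mem_Ico (ivl A) p).1
    apply div_pos (by linarith) (by positivity)
  have htermlt : ∀ W ∈ DA n q g,
      (α (ivl W) q + 1) / 2 ^ ((runs (ivl W) q true).card) < 1 := by
    intro W hW
    obtain ⟨hWrun, C, hC, ⟨i, hi⟩, _⟩ := mem_DA.mp hW
    rw [Finset.mem_inter] at hi
    have hqi : q i = true := (mem_runs.mp hC).2.2.2.2.1 i hi.1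
    have hW1 : 1 ≤ W.1 := (mem_dom.mp (mem_runs.mp hWrun).1).1
    obtain ⟨R, hR, _⟩ := runs_exists (a := W.1) (b := W.2) hW1 hi.2 hqi
    have hcpos : 0 < (runs (ivl W) q true).card := Finset.card_pos.mpr ⟨R, hR⟩
    have hα1 := (hα.mem_Ico (ivl W) q).2
    have hα0 := (hα.mem_Ico (ivl W) q).1
    rw [div_lt_one (by positivity)]
    have h2c : (2:ℝ) ≤ 2 ^ ((runs (ivl W) q true).card) := by
      calc (2:ℝ) = 2 ^ 1 := (pow_one 2).symm
      _ ≤ 2 ^ ((runs (ivl W) q true).card) := by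
          apply pow_le_pow_right₀ (by norm_num) hcpos
    linarith
  have htermnn : ∀ W ∈ DA n q g,
      0 ≤ (α (ivl W) q + 1) / 2 ^ ((runs (ivl W) q true).card) := by
    intro W hW
    have hα0 := (hα.mem_Ico (ivl W) q).1
    apply div_nonneg (by linarith) (by positivity)
  -- average comparison
  have havg : -(1/2 : ℝ) <
      (∑ W ∈ DA n p g, (α (ivl W) p + 1) / 2 ^ ((runs (ivl W) p true).card)) /
        ((DA n p g).card : ℝ)
      - (∑ W ∈ DA n q g, (α (ivl W) q + 1) / 2 ^ ((runs (ivl W) q true).card)) /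
        ((DA n q g).card : ℝ) := by
    rw [hsum, hkcast]
    rcases Nat.eq_zero_or_pos (DA n q g).card with hk | hk
    · have hDAe : DA n q g = ∅ := Finset.card_eq_zero.mp hk
      rw [hDAe]
      simp only [Finset.sum_empty, Finset.card_empty, Nat.cast_zero, add_zero,
        zero_add, div_one, zero_div, div_zero, sub_zero]
      linarith
    · have hne : (DA n q g).Nonempty := Finset.card_pos.mp hk
      have hSlt : (∑ W ∈ DA n q g, (α (ivl W) q + 1) / 2 ^ ((runs (ivl W) q true).card))
          < ((DA n q g).card : ℝ) := by
        have h := Finset.sum_lt_sum_of_nonempty hne htermlt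
        rw [Finset.sum_const, nsmul_eq_mul, mul_one] at h
        exact h
      have hS0 : 0 ≤ ∑ W ∈ DA n q g, (α (ivl W) q + 1) / 2 ^ ((runs (ivl W) q true).card) :=
        Finset.sum_nonneg htermnn
      have hk1 : (1:ℝ) ≤ ((DA n q g).card : ℝ) := by exact_mod_cast hk
      have hK0 : (0:ℝ) < ((DA n q g).card : ℝ) := by linarith
      rw [div_sub_div _ _ (by linarith : ((DA n q g).card : ℝ) + 1 ≠ 0) (ne_of_gt hK0),
        lt_div_iff₀ (by positivity)]
      nlinarith [mul_pos htermA hK0,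
        mul_nonneg (sub_nonneg.mpr hk1) (le_of_lt hK0), hSlt, hS0]
  -- penalty comparison
  have hpenN := penalty_count hA hpq hAq hEL
  have ht0 : (0:ℝ) < (t:ℝ) := by exact_mod_cast Nat.lt_of_lt_of_le Nat.zero_lt_one ht
  have h1t0 : (0:ℝ) < 1 / (t:ℝ) := by positivity
  have h1t1 : 1 / (t:ℝ) ≤ 1 := by
    rw [div_le_one ht0]
    exact_mod_cast ht
  have hpenR : (((TA n p g).card : ℝ) + 3 / 2 * ((EA n p g).card : ℝ)
        + 1 / 2 * ((LA n p g).card : ℝ)) ≤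
      (((TA n q g).card : ℝ) + 3 / 2 * ((EA n q g).card : ℝ)
        + 1 / 2 * ((LA n q g).card : ℝ)) + 1 / 2 := by
    have : ((2 * (TA n p g).card + 3 * (EA n p g).card + (LA n p g).card : ℕ) : ℝ) ≤
        ((2 * (TA n q g).card + 3 * (EA n q g).card + (LA n q g).card + 1 : ℕ) : ℝ) := by
      exact_mod_cast hpenN
    push_cast at this
    linarith
  have hpen : (1 / (t:ℝ)) * (((TA n p g).card : ℝ) + 3 / 2 * ((EA n p g).card : ℝ)
        + 1 / 2 * ((LA n p g).card : ℝ)) ≤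
      (1 / (t:ℝ)) * (((TA n q g).card : ℝ) + 3 / 2 * ((EA n q g).card : ℝ)
        + 1 / 2 * ((LA n q g).card : ℝ)) + 1 / 2 := by
    have h := mul_le_mul_of_nonneg_left hpenR (le_of_lt h1t0)
    have h2 : (1 / (t:ℝ)) * (1 / 2) ≤ 1 / 2 := by nlinarith
    nlinarith
  -- assemble
  simp only [ALARM, gt_iff_lt]
  linarith [havg, hpen, hkcast, hβe]

end TSAD
end

section
/- Point-wise Recall, Recall(g,p) = |p^{-1}(1) ∩ g^{-1}(1)| / |g^{-1}(1)|, satisfies Properties 1, 5 and 7: (a) if A ∈ I_1(g), p(i) = q(i) for all i ∉ A, |I_1(p_A)| > 0 and |I_1(q_A)| = 0, then Recall(g,p) > Recall(g,q); (b) if N ∈ I_0(g), p(i) = q(i) for all i ∉ N, |p^{-1}(1)| = |q^{-1}(1)| and |I_1(p_N)| = |I_1(q_N)|, then Recall(g,p) = Recall(g,q); (c) if A ∈ I_1(g), i* ∈ A, p(i) = q(i) for all i ≠ i*, p(i*) = 1, q(i*) = 0 and |I_1(p_A)| ≤ |I_1(q_A)|, then Recall(g,p) > Recall(g,q). -/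
namespace TSAD

open Finset

/-- If `q` takes the value `true` somewhere in `Icc l u` with `1 ≤ l`, then the set of
maximal `true`-runs of `q` inside `Icc l u` is nonempty. -/
lemma runs_nonempty_of_true {l u j : ℕ} (hl : 1 ≤ l) {q : ℕ → Bool}
    (hj : j ∈ Finset.Icc l u) (hq : q j = true) :
    (runs (Finset.Icc l u) q true).Nonempty := by
  simp only [Finset.mem_Icc] at hj
  obtain ⟨hlj, hju⟩ := hj
  set S := (Finset.Icc l j).filter (fun k => ∀ m ∈ Finset.Icc k j, q m = true) with hSdef
  have hjS : j ∈ S := by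
    simp only [hSdef, Finset.mem_filter, Finset.mem_Icc]
    refine ⟨⟨hlj, le_rfl⟩, fun m hm => ?_⟩
    have : m = j := le_antisymm hm.2 hm.1
    simpa [this] using hq
  have hSne : S.Nonempty := ⟨j, hjS⟩
  set a := S.min' hSne with ha
  have haS : a ∈ S := S.min'_mem hSne
  simp only [hSdef, Finset.mem_filter, Finset.mem_Icc] at haS
  obtain ⟨⟨hla, haj⟩, haq⟩ := haS
  set T := (Finset.Icc j u).filter (fun k => ∀ m ∈ Finset.Icc j k, q m = true) with hTdef
  have hjT : j ∈ T := by
    simp only [hTdef, Finset.mem_filter, Finset.mem_Icc]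
    refine ⟨⟨le_rfl, hju⟩, fun m hm => ?_⟩
    have : m = j := le_antisymm hm.2 hm.1
    simpa [this] using hq
  have hTne : T.Nonempty := ⟨j, hjT⟩
  set b := T.max' hTne with hb
  have hbT : b ∈ T := T.max'_mem hTne
  simp only [hTdef, Finset.mem_filter, Finset.mem_Icc] at hbT
  obtain ⟨⟨hjb, hbu⟩, hbq⟩ := hbT
  refine ⟨(a, b), ?_⟩
  rw [runs, Finset.mem_filter]
  simp only [Finset.mem_product, Finset.mem_Icc, ivl]
  refine ⟨⟨⟨hla, haj.trans hju⟩, ⟨hla.trans (haj.trans hjb), hbu⟩⟩,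
    haj.trans hjb, ?_, fun i hi => ?_, fun hmem => ?_, fun hmem => ?_⟩
  · exact Finset.Icc_subset_Icc hla hbu
  · rcases le_total i j with h | h
    · exact haq i ⟨hi.1, h⟩
    · exact hbq i ⟨h, hi.2⟩
  · -- left maximality
    intro hq1
    have h1a : 1 ≤ a := hl.trans hla
    have hlt : a - 1 < a := Nat.sub_lt h1a one_pos
    have : a - 1 ∈ S := by
      simp only [hSdef, Finset.mem_filter, Finset.mem_Icc]
      refine ⟨⟨hmem.1, (hlt.trans_le haj).le⟩, fun m hm => ?_⟩
      rcases eq_or_lt_of_le hm.1 with h | h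
      · simpa [← h] using hq1
      · have : a ≤ m := by omega
        exact haq m ⟨this, hm.2⟩
    exact absurd (S.min'_le _ this) (not_le.mpr hlt)
  · -- right maximality
    intro hq1
    have : b + 1 ∈ T := by
      simp only [hTdef, Finset.mem_filter, Finset.mem_Icc]
      refine ⟨⟨hjb.trans (Nat.le_succ b), hmem.2⟩, fun m hm => ?_⟩
      rcases eq_or_lt_of_le hm.2 with h | h
      · simpa [h] using hq1
      · have : m ≤ b := by omega
        exact hbq m ⟨hm.1, this⟩
    exact absurd (T.le_max' _ this) (by omega)

/-- Point-wise Recall satisfies Properties 1 (detection of anomalies),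
5 (invariance under permutation of false positives) and 7 (maximizing true positives). -/
theorem recall_properties (n : ℕ) (hn : 1 ≤ n) (g : ℕ → Bool)
    (hg : 0 < (ones (dom n) g).card) :
    (∀ p q : ℕ → Bool, ∀ A ∈ runs (dom n) g true,
      (∀ i ∈ dom n, i ∉ ivl A → p i = q i) →
      0 < (runs (ivl A) p true).card → (runs (ivl A) q true).card = 0 →
      recallPW n g p > recallPW n g q) ∧
    (∀ p q : ℕ → Bool, ∀ N ∈ runs (dom n) g false,
      (∀ i ∈ dom n, i ∉ ivl N → p i = q i) →
      (ones (dom n) p).card = (ones (dom n) q).card →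
      (runs (ivl N) p true).card = (runs (ivl N) q true).card →
      recallPW n g p = recallPW n g q) ∧
    (∀ p q : ℕ → Bool, ∀ A ∈ runs (dom n) g true, ∀ iStar ∈ ivl A,
      (∀ i ∈ dom n, i ≠ iStar → p i = q i) →
      p iStar = true → q iStar = false →
      (runs (ivl A) p true).card ≤ (runs (ivl A) q true).card →
      recallPW n g p > recallPW n g q) := by
  classical
  have hD : (0:ℝ) < ((ones (dom n) g).card : ℝ) := by exact_mod_cast hg
  refine ⟨?_, ?_, ?_⟩
  · -- Property 1
    intro p q A hA hpq hp hq
    simp only [runs, Finset.mem_filter, Finset.mem_product] at hA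
    obtain ⟨⟨hA1, hA2⟩, hle, hsub, hgtrue, -, -⟩ := hA
    have hA1' : 1 ≤ A.1 := by
      simp only [dom, Finset.mem_Icc] at hA1; exact hA1.1
    have hqfalse : ∀ i ∈ ivl A, q i = false := by
      intro i hi
      by_contra h
      have hqi : q i = true := by simpa using h
      have hne : (runs (ivl A) q true).Nonempty :=
        runs_nonempty_of_true hA1' (by simpa [ivl] using hi) hqi
      have := Finset.card_pos.mpr hne
      omega
    obtain ⟨W, hW⟩ := Finset.card_pos.mp hp
    simp only [runs, Finset.mem_filter, Finset.mem_product] at hW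
    obtain ⟨-, hWle, hWsub, hWtrue, -, -⟩ := hW
    have hjA : W.1 ∈ ivl A := hWsub (by simp [ivl, hWle])
    have hjp : p W.1 = true := hWtrue W.1 (by simp [ivl, hWle])
    have hss : (dom n).filter (fun i => q i = true ∧ g i = true)
        ⊂ (dom n).filter (fun i => p i = true ∧ g i = true) := by
      rw [Finset.ssubset_iff_of_subset ?_]
      · exact ⟨W.1, Finset.mem_filter.mpr ⟨hsub hjA, hjp, hgtrue W.1 hjA⟩,
          fun hmem => by simp [hqfalse W.1 hjA] at hmem⟩
      · intro i hi
        simp only [Finset.mem_filter] at hi ⊢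
        refine ⟨hi.1, ?_, hi.2.2⟩
        by_cases hiA : i ∈ ivl A
        · exact absurd hi.2.1 (by simp [hqfalse i hiA])
        · rw [← hpq i hi.1 hiA] at hi; exact hi.2.1
    have hlt := Finset.card_lt_card hss
    unfold recallPW
    gcongr
  · -- Property 5
    intro p q N hN hpq _ _
    simp only [runs, Finset.mem_filter, Finset.mem_product] at hN
    obtain ⟨-, -, -, hgfalse, -, -⟩ := hN
    have : (dom n).filter (fun i => p i = true ∧ g i = true)
        = (dom n).filter (fun i => q i = true ∧ g i = true) := by
      apply Finset.filter_congr
      intro i hi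
      by_cases hiN : i ∈ ivl N
      · simp [hgfalse i hiN]
      · rw [hpq i hi hiN]
    unfold recallPW
    rw [this]
  · -- Property 7
    intro p q A hA iStar hiStar hpq hpStar hqStar _
    simp only [runs, Finset.mem_filter, Finset.mem_product] at hA
    obtain ⟨-, -, hsub, hgtrue, -, -⟩ := hA
    have hss : (dom n).filter (fun i => q i = true ∧ g i = true)
        ⊂ (dom n).filter (fun i => p i = true ∧ g i = true) := by
      rw [Finset.ssubset_iff_of_subset ?_]
      · exact ⟨iStar, Finset.mem_filter.mpr ⟨hsub hiStar, hpStar, hgtrue iStar hiStar⟩,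
          fun hmem => by simp [hqStar] at hmem⟩
      · intro i hi
        simp only [Finset.mem_filter] at hi ⊢
        refine ⟨hi.1, ?_, hi.2.2⟩
        by_cases hii : i = iStar
        · exact absurd hi.2.1 (by simp [hii, hqStar])
        · rw [← hpq i hi.1 hii] at hi; exact hi.2.1
    have hlt := Finset.card_lt_card hss
    unfold recallPW
    gcongr

end TSAD
end

section
/- The point-wise F1-score, F1(g,p) = 2|p^{-1}(1) ∩ g^{-1}(1)| / (|p^{-1}(1)| + |g^{-1}(1)|), satisfies Properties 1, 5 and 7: (a) if A ∈ I_1(g), p(i) = q(i) for all i ∉ A, |I_1(p_A)| > 0 and |I_1(q_A)| = 0, then F1(g,p) > F1(g,q); (b) if N ∈ I_0(g), p(i) = q(i) for all i ∉ N, |p^{-1}(1)| = |q^{-1}(1)| and |I_1(p_N)| = |I_1(q_N)|, then F1(g,p) = F1(g,q); (c) if A ∈ I_1(g), i* ∈ A, p(i) = q(i) for all i ≠ i*, p(i*) = 1, q(i*) = 0 and |I_1(p_A)| ≤ |I_1(q_A)|, then F1(g,p) > F1(g,q). -/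
namespace TSAD

open Finset

lemma runs_spec {S : Finset ℕ} {s : ℕ → Bool} {v : Bool} {W : ℕ × ℕ}
    (h : W ∈ runs S s v) : ivl W ⊆ S ∧ W.1 ≤ W.2 ∧ ∀ i ∈ ivl W, s i = v := by
  simp only [runs, Finset.mem_filter] at h
  exact ⟨h.2.2.1, h.2.1, h.2.2.2.1⟩

lemma exists_true_of_runs_pos {S : Finset ℕ} {p : ℕ → Bool}
    (h : 0 < (runs S p true).card) : ∃ i ∈ S, p i = true := by
  obtain ⟨W, hW⟩ := Finset.card_pos.mp h
  obtain ⟨hsub, hle, hval⟩ := runs_spec hW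
  have h1 : W.1 ∈ ivl W := Finset.mem_Icc.mpr ⟨le_refl _, hle⟩
  exact ⟨W.1, hsub h1, hval _ h1⟩

lemma runs_nonempty_of_true_s14 {a b : ℕ} (ha : 1 ≤ a) {q : ℕ → Bool} {i : ℕ}
    (hi : i ∈ Finset.Icc a b) (hq : q i = true) :
    (runs (Finset.Icc a b) q true).Nonempty := by
  obtain ⟨hai, hib⟩ := Finset.mem_Icc.mp hi
  set S : Finset ℕ := (Finset.Icc a i).filter (fun l => ∀ k ∈ Finset.Icc l i, q k = true)
    with hS
  have hiS : i ∈ S := by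
    simp only [hS, Finset.mem_filter, Finset.mem_Icc]
    refine ⟨⟨hai, le_refl _⟩, fun k hk => ?_⟩
    have : k = i := le_antisymm hk.2 hk.1
    simpa [this] using hq
  have hSne : S.Nonempty := ⟨i, hiS⟩
  set l := S.min' hSne with hl
  have hlS : l ∈ S := S.min'_mem hSne
  obtain ⟨hlmem, hlval⟩ := Finset.mem_filter.mp hlS
  obtain ⟨hal, hli⟩ := Finset.mem_Icc.mp hlmem
  set T : Finset ℕ := (Finset.Icc i b).filter (fun u => ∀ k ∈ Finset.Icc i u, q k = true)
    with hT
  have hiT : i ∈ T := by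
    simp only [hT, Finset.mem_filter, Finset.mem_Icc]
    refine ⟨⟨le_refl _, hib⟩, fun k hk => ?_⟩
    have : k = i := le_antisymm hk.2 hk.1
    simpa [this] using hq
  have hTne : T.Nonempty := ⟨i, hiT⟩
  set u := T.max' hTne with hu
  have huT : u ∈ T := T.max'_mem hTne
  obtain ⟨humem, huval⟩ := Finset.mem_filter.mp huT
  obtain ⟨hiu, hub⟩ := Finset.mem_Icc.mp humem
  refine ⟨(l, u), ?_⟩
  simp only [runs, Finset.mem_filter, Finset.mem_product]
  have hicc : ∀ k ∈ ivl (l, u), q k = true := by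
    intro k hk
    obtain ⟨hlk, hku⟩ := Finset.mem_Icc.mp hk
    rcases le_total k i with h | h
    · exact hlval k (Finset.mem_Icc.mpr ⟨hlk, h⟩)
    · exact huval k (Finset.mem_Icc.mpr ⟨h, hku⟩)
  refine ⟨⟨Finset.mem_Icc.mpr ⟨hal, hli.trans hib⟩, Finset.mem_Icc.mpr ⟨hai.trans hiu, hub⟩⟩,
    hli.trans hiu, ?_, hicc, ?_, ?_⟩
  · intro k hk
    obtain ⟨hlk, hku⟩ := Finset.mem_Icc.mp hk
    exact Finset.mem_Icc.mpr ⟨hal.trans hlk, hku.trans hub⟩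
  · intro hmem hval
    obtain ⟨hal', _⟩ := Finset.mem_Icc.mp hmem
    have hl1 : 1 ≤ l := ha.trans hal
    have : l - 1 ∈ S := by
      simp only [hS, Finset.mem_filter, Finset.mem_Icc]
      refine ⟨⟨hal', (Nat.sub_le l 1).trans hli⟩, fun k hk => ?_⟩
      obtain ⟨h1k, h2k⟩ := hk
      rcases eq_or_lt_of_le h1k with h | h
      · simpa [← h] using hval
      · exact hlval k (Finset.mem_Icc.mpr ⟨Nat.le_of_pred_lt h, h2k⟩)
    have := S.min'_le _ this
    omega
  · intro hmem hval
    obtain ⟨_, hub'⟩ := Finset.mem_Icc.mp hmem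
    have : u + 1 ∈ T := by
      simp only [hT, Finset.mem_filter, Finset.mem_Icc]
      refine ⟨⟨hiu.trans (Nat.le_succ u), hub'⟩, fun k hk => ?_⟩
      obtain ⟨h1k, h2k⟩ := hk
      rcases eq_or_lt_of_le h2k with h | h
      · simpa [h] using hval
      · exact huval k (Finset.mem_Icc.mpr ⟨h1k, Nat.lt_succ_iff.mp h⟩)
    have := T.le_max' _ this
    omega

lemma card_filter_split {D S : Finset ℕ} (h : S ⊆ D) (P : ℕ → Prop) [DecidablePred P] :
    (D.filter P).card = ((D \ S).filter P).card + (S.filter P).card := by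
  rw [← Finset.card_union_of_disjoint
      (Finset.disjoint_filter_filter Finset.sdiff_disjoint),
    ← Finset.filter_union, Finset.sdiff_union_of_subset h]

lemma f1_ineq {T P G a : ℝ} (hT : 0 ≤ T) (hTP : T ≤ P) (hG : 1 ≤ G) (ha : 1 ≤ a) :
    2 * T / (P + G) < 2 * (T + a) / ((P + a) + G) := by
  have hP : 0 ≤ P := hT.trans hTP
  rw [div_lt_div_iff₀ (by linarith) (by linarith)]
  nlinarith [mul_le_mul_of_nonneg_left hTP (by linarith : (0:ℝ) ≤ a),
    mul_le_mul_of_nonneg_left hG (by linarith : (0:ℝ) ≤ a)]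

/-- The point-wise F1-score satisfies Properties 1 (detection of anomalies),
5 (invariance under permutation of false positives) and 7 (maximizing true positives). -/
theorem f1_properties (n : ℕ) (hn : 1 ≤ n) (g : ℕ → Bool)
    (hg : 0 < (ones (dom n) g).card) :
    (∀ p q : ℕ → Bool, ∀ A ∈ runs (dom n) g true,
      (∀ i ∈ dom n, i ∉ ivl A → p i = q i) →
      0 < (runs (ivl A) p true).card → (runs (ivl A) q true).card = 0 →
      f1PW n g p > f1PW n g q) ∧
    (∀ p q : ℕ → Bool, ∀ N ∈ runs (dom n) g false,
      (∀ i ∈ dom n, i ∉ ivl N → p i = q i) →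
      (ones (dom n) p).card = (ones (dom n) q).card →
      (runs (ivl N) p true).card = (runs (ivl N) q true).card →
      f1PW n g p = f1PW n g q) ∧
    (∀ p q : ℕ → Bool, ∀ A ∈ runs (dom n) g true, ∀ iStar ∈ ivl A,
      (∀ i ∈ dom n, i ≠ iStar → p i = q i) →
      p iStar = true → q iStar = false →
      (runs (ivl A) p true).card ≤ (runs (ivl A) q true).card →
      f1PW n g p > f1PW n g q) := by
  have hG1 : 1 ≤ (ones (dom n) g).card := hg
  refine ⟨?_, ?_, ?_⟩
  · -- Property 1
    intro p q A hA hpq hp hq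
    obtain ⟨hsub, hle, hgA⟩ := runs_spec hA
    have hA1 : 1 ≤ A.1 :=
      (Finset.mem_Icc.mp (hsub (Finset.mem_Icc.mpr ⟨le_refl _, hle⟩))).1
    -- q is false on ivl A
    have hqA : ∀ i ∈ ivl A, q i = false := by
      intro i hi
      by_contra hcon
      have hqi : q i = true := by simpa using hcon
      have := runs_nonempty_of_true_s14 hA1 hi hqi
      have hpos : 0 < (runs (ivl A) q true).card := Finset.card_pos.mpr this
      omega
    have houtside : ∀ i ∈ dom n \ ivl A, p i = q i := by
      intro i hi
      obtain ⟨h1, h2⟩ := Finset.mem_sdiff.mp hi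
      exact hpq i h1 h2
    -- decompositions
    have eP : (ones (dom n) p).card =
        ((dom n \ ivl A).filter (fun i => p i = true)).card
          + ((ivl A).filter (fun i => p i = true)).card :=
      card_filter_split hsub _
    have eQ : (ones (dom n) q).card =
        ((dom n \ ivl A).filter (fun i => p i = true)).card := by
      rw [ones, card_filter_split hsub (fun i => q i = true)]
      have e1 : ((ivl A).filter (fun i => q i = true)) = ∅ := by
        rw [Finset.filter_eq_empty_iff]
        intro i hi
        simp [hqA i hi]
      have e2 : ((dom n \ ivl A).filter (fun i => q i = true))
          = ((dom n \ ivl A).filter (fun i => p i = true)) := by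
        apply Finset.filter_congr
        intro i hi
        simp [houtside i hi]
      rw [e1, e2]
      simp
    have eTP : ((dom n).filter (fun i => p i = true ∧ g i = true)).card =
        ((dom n \ ivl A).filter (fun i => p i = true ∧ g i = true)).card
          + ((ivl A).filter (fun i => p i = true)).card := by
      have e3 : ((ivl A).filter (fun i => p i = true ∧ g i = true))
          = ((ivl A).filter (fun i => p i = true)) :=
        Finset.filter_congr (fun i hi => by simp [hgA i hi])
      rw [card_filter_split hsub (fun i => p i = true ∧ g i = true), e3]
    have eTQ : ((dom n).filter (fun i => q i = true ∧ g i = true)).card =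
        ((dom n \ ivl A).filter (fun i => p i = true ∧ g i = true)).card := by
      rw [card_filter_split hsub (fun i => q i = true ∧ g i = true)]
      have e1 : ((ivl A).filter (fun i => q i = true ∧ g i = true)) = ∅ := by
        rw [Finset.filter_eq_empty_iff]
        intro i hi
        simp [hqA i hi]
      have e2 : ((dom n \ ivl A).filter (fun i => q i = true ∧ g i = true))
          = ((dom n \ ivl A).filter (fun i => p i = true ∧ g i = true)) := by
        apply Finset.filter_congr
        intro i hi
        simp [houtside i hi]
      rw [e1, e2]
      simp
    have ha1 : 1 ≤ ((ivl A).filter (fun i => p i = true)).card := by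
      obtain ⟨i, hi, hpi⟩ := exists_true_of_runs_pos hp
      exact Finset.card_pos.mpr ⟨i, Finset.mem_filter.mpr ⟨hi, hpi⟩⟩
    have hTP : ((dom n \ ivl A).filter (fun i => p i = true ∧ g i = true)).card ≤
        ((dom n \ ivl A).filter (fun i => p i = true)).card := by
      apply Finset.card_le_card
      intro i hi
      obtain ⟨h1, h2, _⟩ := Finset.mem_filter.mp hi
      exact Finset.mem_filter.mpr ⟨h1, h2⟩
    unfold f1PW
    rw [eP, eQ, eTP, eTQ]
    push_cast
    exact f1_ineq (by positivity) (by exact_mod_cast hTP) (by exact_mod_cast hG1)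
      (by exact_mod_cast ha1)
  · -- Property 5
    intro p q N hN hpq hcard _
    obtain ⟨hsub, hle, hgN⟩ := runs_spec hN
    have houtside : ∀ i ∈ dom n \ ivl N, p i = q i := by
      intro i hi
      obtain ⟨h1, h2⟩ := Finset.mem_sdiff.mp hi
      exact hpq i h1 h2
    have eNum : ((dom n).filter (fun i => p i = true ∧ g i = true)).card =
        ((dom n).filter (fun i => q i = true ∧ g i = true)).card := by
      rw [card_filter_split hsub (fun i => p i = true ∧ g i = true),
        card_filter_split hsub (fun i => q i = true ∧ g i = true)]
      have e1 : ∀ r : ℕ → Bool,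
          ((ivl N).filter (fun i => r i = true ∧ g i = true)) = ∅ := by
        intro r
        rw [Finset.filter_eq_empty_iff]
        intro i hi
        simp [hgN i hi]
      have e2 : ((dom n \ ivl N).filter (fun i => p i = true ∧ g i = true))
          = ((dom n \ ivl N).filter (fun i => q i = true ∧ g i = true)) := by
        apply Finset.filter_congr
        intro i hi
        simp [houtside i hi]
      rw [e1, e1, e2]
    unfold f1PW
    rw [eNum, hcard]
  · -- Property 7
    intro p q A hA iStar hiStar hpq hpi hqi _
    obtain ⟨hsub, hle, hgA⟩ := runs_spec hA
    have hidom : iStar ∈ dom n := hsub hiStar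
    have hgi : g iStar = true := hgA iStar hiStar
    have eP : (dom n).filter (fun i => p i = true)
        = insert iStar ((dom n).filter (fun i => q i = true)) := by
      ext j
      simp only [Finset.mem_insert, Finset.mem_filter]
      constructor
      · rintro ⟨hj, hpj⟩
        rcases eq_or_ne j iStar with h | h
        · exact Or.inl h
        · exact Or.inr ⟨hj, (hpq j hj h) ▸ hpj⟩
      · rintro (h | ⟨hj, hqj⟩)
        · exact ⟨h ▸ hidom, h ▸ hpi⟩
        · rcases eq_or_ne j iStar with h | h
          · exact ⟨hj, h ▸ hpi⟩
          · exact ⟨hj, (hpq j hj h).symm ▸ hqj⟩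
    have eT : (dom n).filter (fun i => p i = true ∧ g i = true)
        = insert iStar ((dom n).filter (fun i => q i = true ∧ g i = true)) := by
      ext j
      simp only [Finset.mem_insert, Finset.mem_filter]
      constructor
      · rintro ⟨hj, hpj, hgj⟩
        rcases eq_or_ne j iStar with h | h
        · exact Or.inl h
        · exact Or.inr ⟨hj, (hpq j hj h) ▸ hpj, hgj⟩
      · rintro (h | ⟨hj, hqj, hgj⟩)
        · exact ⟨h ▸ hidom, h ▸ hpi, h ▸ hgi⟩
        · rcases eq_or_ne j iStar with h | h
          · exact ⟨hj, h ▸ hpi, hgj⟩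
          · exact ⟨hj, (hpq j hj h).symm ▸ hqj, hgj⟩
    have hniP : iStar ∉ (dom n).filter (fun i => q i = true) := by
      simp [hqi]
    have hniT : iStar ∉ (dom n).filter (fun i => q i = true ∧ g i = true) := by
      simp [hqi]
    have hcP : ((dom n).filter (fun i => p i = true)).card
        = ((dom n).filter (fun i => q i = true)).card + 1 := by
      rw [eP, Finset.card_insert_of_notMem hniP]
    have hcT : ((dom n).filter (fun i => p i = true ∧ g i = true)).card
        = ((dom n).filter (fun i => q i = true ∧ g i = true)).card + 1 := by
      rw [eT, Finset.card_insert_of_notMem hniT]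
    have hTP : ((dom n).filter (fun i => q i = true ∧ g i = true)).card ≤
        ((dom n).filter (fun i => q i = true)).card := by
      apply Finset.card_le_card
      intro i hi
      obtain ⟨h1, h2, _⟩ := Finset.mem_filter.mp hi
      exact Finset.mem_filter.mpr ⟨h1, h2⟩
    unfold f1PW
    rw [ones, hcP, hcT]
    push_cast
    exact f1_ineq (by positivity) (by exact_mod_cast hTP) (by exact_mod_cast hG1) le_rfl

end TSAD
end

section
/- Let TD(g,p) = Σ_{i ∈ g^{-1}(1)} min_{j ∈ p^{-1}(1)} |i − j| + Σ_{i ∈ p^{-1}(1)} min_{j ∈ g^{-1}(1)} |i − j| be the temporal distance, and let m_TD(g,p) = f(TD(g,p)) for a strictly decreasing function f : ℝ → ℝ. Assume g^{-1}(1), p^{-1}(1) and q^{-1}(1) are nonempty. Then m_TD satisfies Properties 1 and 7: (a) if A ∈ I_1(g), p(i) = q(i) for all i ∉ A, |I_1(p_A)| > 0 and |I_1(q_A)| = 0, then m_TD(g,p) > m_TD(g,q); (b) if A ∈ I_1(g), i* ∈ A, p(i) = q(i) for all i ≠ i*, p(i*) = 1, q(i*) = 0 and |I_1(p_A)| ≤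 |I_1(q_A)|, then m_TD(g,p) > m_TD(g,q). -/
namespace TSAD

open Finset

lemma minDist_le (i j : ℕ) (S : Finset ℕ) (hj : j ∈ S) :
    minDist i S ≤ ((i : ℤ) - (j : ℤ)).natAbs :=
  Nat.sInf_le ⟨j, hj, rfl⟩

lemma minDist_eq_zero (i : ℕ) (S : Finset ℕ) (hi : i ∈ S) : minDist i S = 0 :=
  Nat.le_zero.mp (by simpa using minDist_le i i S hi)

lemma minDist_pos (i : ℕ) (S : Finset ℕ) (hS : S.Nonempty) (hi : i ∉ S) :
    0 < minDist i S := by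
  rcases hS with ⟨j, hj⟩
  have hne : {d : ℕ | ∃ k ∈ S, d = ((i : ℤ) - (k : ℤ)).natAbs}.Nonempty := ⟨_, j, hj, rfl⟩
  rcases Nat.sInf_mem hne with ⟨k, hk, hkeq⟩
  rw [Nat.pos_iff_ne_zero]
  intro h0
  rw [minDist] at h0
  rw [h0] at hkeq
  have : i = k := by omega
  exact hi (this ▸ hk)

lemma minDist_le_minDist (i : ℕ) {Q P : Finset ℕ} (hQP : Q ⊆ P) (hQ : Q.Nonempty) :
    minDist i P ≤ minDist i Q := by
  rcases hQ with ⟨j, hj⟩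
  have hne : {d : ℕ | ∃ k ∈ Q, d = ((i : ℤ) - (k : ℤ)).natAbs}.Nonempty := ⟨_, j, hj, rfl⟩
  rcases Nat.sInf_mem hne with ⟨k, hk, hkeq⟩
  have h1 : minDist i P ≤ ((i : ℤ) - (k : ℤ)).natAbs := minDist_le i k P (hQP hk)
  have h2 : minDist i Q = ((i : ℤ) - (k : ℤ)).natAbs := hkeq
  omega

lemma runs_prop {A : Finset ℕ} {s : ℕ → Bool} {v : Bool} {W : ℕ × ℕ}
    (h : W ∈ runs A s v) :
    W.1 ∈ A ∧ W.2 ∈ A ∧ W.1 ≤ W.2 ∧ ivl W ⊆ A ∧ ∀ i ∈ ivl W, s i = v := by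
  rw [runs, Finset.mem_filter, Finset.mem_product] at h
  exact ⟨h.1.1, h.1.2, h.2.1, h.2.2.1, h.2.2.2.1⟩

/-- If there is no maximal `true`-run of `q` inside `Icc l u`, then `q` is false on all
of `Icc l u`. -/
lemma all_false_of_runs_card_zero {l u : ℕ} (hl : 1 ≤ l) {q : ℕ → Bool}
    (h : (runs (Finset.Icc l u) q true).card = 0) :
    ∀ j ∈ Finset.Icc l u, q j = false := by
  intro j hj
  by_contra hqne
  have hqj : q j = true := by
    cases hq : q j with
    | false => exact absurd hq hqne
    | true => rfl
  rw [Finset.mem_Icc] at hj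
  obtain ⟨hjl, hju⟩ := hj
  -- left endpoint
  set S : Set ℕ := {a | l ≤ a ∧ a ≤ j ∧ ∀ i ∈ Finset.Icc a j, q i = true} with hSdef
  have hjS : j ∈ S := by
    refine ⟨hjl, le_refl j, ?_⟩
    intro i hi
    rw [Finset.mem_Icc] at hi
    obtain rfl : i = j := by omega
    exact hqj
  have haS : sInf S ∈ S := Nat.sInf_mem ⟨j, hjS⟩
  set a := sInf S with hadef
  obtain ⟨hal, haj, haq⟩ := haS
  -- right endpoint
  set T : Finset ℕ := (Finset.Icc j u).filter (fun b => ∀ i ∈ Finset.Icc j b, q i = true)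
    with hTdef
  have hjT : j ∈ T := by
    rw [hTdef, Finset.mem_filter, Finset.mem_Icc]
    refine ⟨⟨le_refl j, hju⟩, ?_⟩
    intro i hi
    rw [Finset.mem_Icc] at hi
    obtain rfl : i = j := by omega
    exact hqj
  set b := T.max' ⟨j, hjT⟩ with hbdef
  have hbT : b ∈ T := T.max'_mem ⟨j, hjT⟩
  rw [hTdef, Finset.mem_filter, Finset.mem_Icc] at hbT
  obtain ⟨⟨hjb, hbu⟩, hbq⟩ := hbT
  -- the pair (a, b) is a maximal run
  have hmem : (a, b) ∈ runs (Finset.Icc l u) q true := by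
    rw [runs, Finset.mem_filter, Finset.mem_product]
    refine ⟨⟨Finset.mem_Icc.mpr ⟨hal, by omega⟩, Finset.mem_Icc.mpr ⟨by omega, hbu⟩⟩,
      by simpa using (by omega : a ≤ b), ?_, ?_, ?_, ?_⟩
    · intro i hi
      rw [ivl, Finset.mem_Icc] at hi
      exact Finset.mem_Icc.mpr ⟨by omega, by omega⟩
    · intro i hi
      rw [ivl, Finset.mem_Icc] at hi
      by_cases hij : i ≤ j
      · exact haq i (Finset.mem_Icc.mpr ⟨hi.1, hij⟩)
      · exact hbq i (Finset.mem_Icc.mpr ⟨by omega, hi.2⟩)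
    · intro hmem1 hqa
      rw [Finset.mem_Icc] at hmem1
      have ha1 : a - 1 ∈ S := by
        refine ⟨by omega, by omega, ?_⟩
        intro i hi
        rw [Finset.mem_Icc] at hi
        by_cases hia : i = a - 1
        · rw [hia]; exact hqa
        · exact haq i (Finset.mem_Icc.mpr ⟨by omega, hi.2⟩)
      have := Nat.sInf_le ha1
      omega
    · intro hmem1 hqb
      rw [Finset.mem_Icc] at hmem1
      have hb1 : b + 1 ∈ T := by
        rw [hTdef, Finset.mem_filter, Finset.mem_Icc]
        refine ⟨⟨by omega, hmem1.2⟩, ?_⟩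
        intro i hi
        rw [Finset.mem_Icc] at hi
        by_cases hib : i = b + 1
        · rw [hib]; exact hqb
        · exact hbq i (Finset.mem_Icc.mpr ⟨hi.1, by omega⟩)
      have := Finset.le_max' T (b + 1) hb1
      omega
  rw [Finset.card_eq_zero] at h
  rw [h] at hmem
  exact absurd hmem (Finset.notMem_empty _)

/-- A metric based on the Temporal Distance via a strictly decreasing function satisfies
Properties 1 (detection of anomalies) and 7 (maximizing true positives). -/
theorem temporal_distance_properties (n : ℕ) (hn : 1 ≤ n) (g : ℕ → Bool)
    (f : ℝ → ℝ) (hf : StrictAnti f)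
    (hg : (ones (dom n) g).Nonempty) :
    (∀ p q : ℕ → Bool, (ones (dom n) p).Nonempty → (ones (dom n) q).Nonempty →
      ∀ A ∈ runs (dom n) g true,
      (∀ i ∈ dom n, i ∉ ivl A → p i = q i) →
      0 < (runs (ivl A) p true).card → (runs (ivl A) q true).card = 0 →
      f ((TD n g p : ℝ)) > f ((TD n g q : ℝ))) ∧
    (∀ p q : ℕ → Bool, (ones (dom n) p).Nonempty → (ones (dom n) q).Nonempty →
      ∀ A ∈ runs (dom n) g true, ∀ iStar ∈ ivl A,
      (∀ i ∈ dom n, i ≠ iStar → p i = q i) →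
      p iStar = true → q iStar = false →
      (runs (ivl A) p true).card ≤ (runs (ivl A) q true).card →
      f ((TD n g p : ℝ)) > f ((TD n g q : ℝ))) := by
  have key : ∀ p q : ℕ → Bool, TD n g p < TD n g q →
      f ((TD n g p : ℝ)) > f ((TD n g q : ℝ)) := by
    intro p q h
    exact hf (by exact_mod_cast h)
  constructor
  · -- Property 1
    intro p q hp hq A hA hpq hcardp hcardq
    apply key
    obtain ⟨hA1, hA2, hA12, hAsub, hgA⟩ := runs_prop hA
    have hA1pos : 1 ≤ A.1 := (Finset.mem_Icc.mp (by simpa [dom] using hA1)).1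
    -- a true point of p in ivl A
    obtain ⟨W, hW⟩ := Finset.card_pos.mp hcardp
    obtain ⟨hW1, _, hW12, hWsub, hWp⟩ := runs_prop hW
    set i₀ := W.1 with hi₀def
    have hi₀A : i₀ ∈ ivl A := hW1
    have hpi₀ : p i₀ = true := hWp i₀ (by rw [ivl, Finset.mem_Icc]; exact ⟨le_refl _, hW12⟩)
    -- q is false on ivl A
    have hqA : ∀ j ∈ ivl A, q j = false := by
      have := all_false_of_runs_card_zero (l := A.1) (u := A.2) hA1pos (q := q)
        (by simpa [ivl] using hcardq)
      simpa [ivl] using this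
    -- set relations
    have hQP : ones (dom n) q ⊆ ones (dom n) p := by
      intro i hi
      rw [ones, Finset.mem_filter] at hi ⊢
      refine ⟨hi.1, ?_⟩
      have hiA : i ∉ ivl A := by
        intro hiA
        rw [hqA i hiA] at hi
        exact absurd hi.2 (by simp)
      rw [hpq i hi.1 hiA]
      exact hi.2
    have hi₀dom : i₀ ∈ dom n := hAsub hi₀A
    have hi₀G : i₀ ∈ ones (dom n) g := by
      rw [ones, Finset.mem_filter]
      exact ⟨hi₀dom, hgA i₀ hi₀A⟩
    have hi₀P : i₀ ∈ ones (dom n) p := by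
      rw [ones, Finset.mem_filter]; exact ⟨hi₀dom, hpi₀⟩
    have hi₀Q : i₀ ∉ ones (dom n) q := by
      rw [ones, Finset.mem_filter]
      rw [hqA i₀ hi₀A]
      simp
    -- first sums
    have h1 : ∑ i ∈ ones (dom n) g, minDist i (ones (dom n) p)
        < ∑ i ∈ ones (dom n) g, minDist i (ones (dom n) q) := by
      refine Finset.sum_lt_sum (fun i _ => minDist_le_minDist i hQP hq) ⟨i₀, hi₀G, ?_⟩
      rw [minDist_eq_zero i₀ _ hi₀P]
      exact minDist_pos i₀ _ hq hi₀Q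
    -- second sums
    have h2 : ∑ i ∈ ones (dom n) q, minDist i (ones (dom n) g)
        = ∑ i ∈ ones (dom n) p, minDist i (ones (dom n) g) := by
      refine Finset.sum_subset hQP ?_
      intro i hiP hiQ
      have hiA : i ∈ ivl A := by
        by_contra hiA
        apply hiQ
        rw [ones, Finset.mem_filter] at hiP ⊢
        refine ⟨hiP.1, ?_⟩
        rw [← hpq i hiP.1 hiA]
        exact hiP.2
      apply minDist_eq_zero
      rw [ones, Finset.mem_filter] at hiP ⊢
      exact ⟨hiP.1, hgA i hiA⟩
    rw [TD, TD]
    omega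
  · -- Property 7
    intro p q hp hq A hA iStar hiStar hpq hpi hqi _
    apply key
    obtain ⟨hA1, hA2, hA12, hAsub, hgA⟩ := runs_prop hA
    have hidom : iStar ∈ dom n := hAsub hiStar
    have hiG : iStar ∈ ones (dom n) g := by
      rw [ones, Finset.mem_filter]
      exact ⟨hidom, hgA iStar hiStar⟩
    have hiP : iStar ∈ ones (dom n) p := by
      rw [ones, Finset.mem_filter]; exact ⟨hidom, hpi⟩
    have hiQ : iStar ∉ ones (dom n) q := by
      rw [ones, Finset.mem_filter, hqi]
      simp
    have hQP : ones (dom n) q ⊆ ones (dom n) p := by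
      intro i hi
      rw [ones, Finset.mem_filter] at hi ⊢
      refine ⟨hi.1, ?_⟩
      have hne : i ≠ iStar := by
        intro h; rw [h, hqi] at hi; exact absurd hi.2 (by simp)
      rw [hpq i hi.1 hne]
      exact hi.2
    have h1 : ∑ i ∈ ones (dom n) g, minDist i (ones (dom n) p)
        < ∑ i ∈ ones (dom n) g, minDist i (ones (dom n) q) := by
      refine Finset.sum_lt_sum (fun i _ => minDist_le_minDist i hQP hq) ⟨iStar, hiG, ?_⟩
      rw [minDist_eq_zero iStar _ hiP]
      exact minDist_pos iStar _ hq hiQ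
    have h2 : ∑ i ∈ ones (dom n) q, minDist i (ones (dom n) g)
        = ∑ i ∈ ones (dom n) p, minDist i (ones (dom n) g) := by
      refine Finset.sum_subset hQP ?_
      intro i hiP' hiQ'
      have hii : i = iStar := by
        by_contra hne
        apply hiQ'
        rw [ones, Finset.mem_filter] at hiP' ⊢
        refine ⟨hiP'.1, ?_⟩
        rw [← hpq i hiP'.1 hne]
        exact hiP'.2
      apply minDist_eq_zero
      rw [hii]
      exact hiG
    rw [TD, TD]
    omega

end TSAD
end
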